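/- Functional extensionality for values (may): let τ, σ be closed types and f, g ∈ Val(τ→σ) closed values such that for all u ∈ Val(τ), f u ≅↓ctx g u : σ. Then f ≅↓ctx g : τ→σ. -/

import Mathlib

set_option maxHeartbeats 1000000

namespace CountChoice

/-! ## Syntax: types and terms (de Bruijn indices) -/

/-- Types: type variables, unit, products, functions, recursive sum types
`μα.(τ₁+…+τₙ)` (the `μ` binds one type variable, common to all summands),
and universal types `∀α.τ`. -/
inductive Ty : Type where
  | var : ℕ → Ty
  | unit : Ty
  | prod : Ty → Ty → Ty
  | arrow : Ty → Ty → Ty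
  | mu : (m : ℕ) → (Fin m → Ty) → Ty
  | all : Ty → Ty

/-- Lifting a renaming under a binder. -/
def liftR (f : ℕ → ℕ) : ℕ → ℕ
  | 0 => 0
  | i + 1 => f i + 1

def Ty.rename (f : ℕ → ℕ) : Ty → Ty
  | .var i => .var (f i)
  | .unit => .unit
  | .prod a b => .prod (a.rename f) (b.rename f)
  | .arrow a b => .arrow (a.rename f) (b.rename f)
  | .mu m ts => .mu m (fun j => (ts j).rename (liftR f))
  | .all a => .all (a.rename (liftR f))

/-- Lifting a type substitution under a type binder. -/
def liftS (σ : ℕ → Ty) : ℕ → Ty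
  | 0 => .var 0
  | i + 1 => (σ i).rename Nat.succ

def Ty.subst (σ : ℕ → Ty) : Ty → Ty
  | .var i => σ i
  | .unit => .unit
  | .prod a b => .prod (a.subst σ) (b.subst σ)
  | .arrow a b => .arrow (a.subst σ) (b.subst σ)
  | .mu m ts => .mu m (fun j => (ts j).subst (liftS σ))
  | .all a => .all (a.subst (liftS σ))

/-- Extending a type substitution (cons). -/
def consTy (τ : Ty) (σ : ℕ → Ty) : ℕ → Ty
  | 0 => τ
  | i + 1 => σ i

/-- `Ty.subst1 σ τ` is `τ[σ/α]`, substitution of `σ` for the innermost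
type variable of `τ`. -/
def Ty.subst1 (σ : Ty) (τ : Ty) : Ty := τ.subst (consTy σ Ty.var)

/-- `Ty.Wf Δ τ`: all free type variables of `τ` are among the first `Δ`. -/
def Ty.Wf : ℕ → Ty → Prop
  | Δ, .var i => i < Δ
  | _, .unit => True
  | Δ, .prod a b => a.Wf Δ ∧ b.Wf Δ
  | Δ, .arrow a b => a.Wf Δ ∧ b.Wf Δ
  | Δ, .mu _ ts => ∀ j, (ts j).Wf (Δ + 1)
  | Δ, .all a => a.Wf (Δ + 1)

/-- Terms.  `case v m es` is `case v of (in₁ x₁.e₁ | … | inₘ xₘ.eₘ)`;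
`choice` is the countable choice `?`; `proj false`/`proj true` are the two
projections; `tapp v τ` is type application `v τ`; `tlam` is `Λα.e`. -/
inductive Tm : Type where
  | var : ℕ → Tm
  | unit : Tm
  | pair : Tm → Tm → Tm
  | lam : Tm → Tm
  | inj : ℕ → Tm → Tm
  | tlam : Tm → Tm
  | choice : Tm
  | proj : Bool → Tm → Tm
  | app : Tm → Tm → Tm
  | case : Tm → (m : ℕ) → (Fin m → Tm) → Tm
  | tapp : Tm → Ty → Tm

/-- Values. -/
inductive IsVal : Tm → Prop where
  | var : ∀ {x}, IsVal (.var x)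
  | unit : IsVal .unit
  | pair : ∀ {v₁ v₂}, IsVal v₁ → IsVal v₂ → IsVal (.pair v₁ v₂)
  | lam : ∀ {e}, IsVal (.lam e)
  | inj : ∀ {j v}, IsVal v → IsVal (.inj j v)
  | tlam : ∀ {e}, IsVal (.tlam e)

/-- Renaming of term variables. -/
def Tm.rename (f : ℕ → ℕ) : Tm → Tm
  | .var i => .var (f i)
  | .unit => .unit
  | .pair a b => .pair (a.rename f) (b.rename f)
  | .lam e => .lam (e.rename (liftR f))
  | .inj j v => .inj j (v.rename f)
  | .tlam e => .tlam (e.rename f)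
  | .choice => .choice
  | .proj b v => .proj b (v.rename f)
  | .app a b => .app (a.rename f) (b.rename f)
  | .case v m es => .case (v.rename f) m (fun j => (es j).rename (liftR f))
  | .tapp v τ => .tapp (v.rename f) τ

/-- Renaming of type variables inside a term. -/
def Tm.tyRename (f : ℕ → ℕ) : Tm → Tm
  | .var i => .var i
  | .unit => .unit
  | .pair a b => .pair (a.tyRename f) (b.tyRename f)
  | .lam e => .lam (e.tyRename f)
  | .inj j v => .inj j (v.tyRename f)
  | .tlam e => .tlam (e.tyRename (liftR f))
  | .choice => .choice
  | .proj b v => .proj b (v.tyRename f)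
  | .app a b => .app (a.tyRename f) (b.tyRename f)
  | .case v m es => .case (v.tyRename f) m (fun j => (es j).tyRename f)
  | .tapp v τ => .tapp (v.tyRename f) (τ.rename f)

/-- Lifting a term substitution under a term binder. -/
def liftT (σ : ℕ → Tm) : ℕ → Tm
  | 0 => .var 0
  | i + 1 => (σ i).rename Nat.succ

/-- Substitution of terms for term variables. -/
def Tm.subst (σ : ℕ → Tm) : Tm → Tm
  | .var i => σ i
  | .unit => .unit
  | .pair a b => .pair (a.subst σ) (b.subst σ)
  | .lam e => .lam (e.subst (liftT σ))
  | .inj j v => .inj j (v.subst σ)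
  | .tlam e => .tlam (e.subst (fun i => (σ i).tyRename Nat.succ))
  | .choice => .choice
  | .proj b v => .proj b (v.subst σ)
  | .app a b => .app (a.subst σ) (b.subst σ)
  | .case v m es => .case (v.subst σ) m (fun j => (es j).subst (liftT σ))
  | .tapp v τ => .tapp (v.subst σ) τ

/-- Substitution of types for type variables inside a term. -/
def Tm.tySubst (σ : ℕ → Ty) : Tm → Tm
  | .var i => .var i
  | .unit => .unit
  | .pair a b => .pair (a.tySubst σ) (b.tySubst σ)
  | .lam e => .lam (e.tySubst σ)
  | .inj j v => .inj j (v.tySubst σ)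
  | .tlam e => .tlam (e.tySubst (liftS σ))
  | .choice => .choice
  | .proj b v => .proj b (v.tySubst σ)
  | .app a b => .app (a.tySubst σ) (b.tySubst σ)
  | .case v m es => .case (v.tySubst σ) m (fun j => (es j).tySubst σ)
  | .tapp v τ => .tapp (v.tySubst σ) (τ.subst σ)

/-- Extending a term substitution (cons). -/
def consTm (v : Tm) (σ : ℕ → Tm) : ℕ → Tm
  | 0 => v
  | i + 1 => σ i

/-- `subst1 v e` is `e[v/x]` for the innermost term variable. -/
def subst1 (v : Tm) (e : Tm) : Tm := e.subst (consTm v Tm.var)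

/-- `tySubst1 σ e` is `e[σ/α]` for the innermost type variable. -/
def tySubst1 (σ : Ty) (e : Tm) : Tm := e.tySubst (consTy σ Ty.var)

/-- A term is closed if it is invariant under all term- and type-variable
substitutions. -/
def Tm.Closed (e : Tm) : Prop :=
  (∀ σ : ℕ → Tm, e.subst σ = e) ∧ (∀ σ : ℕ → Ty, e.tySubst σ = e)

/-! ## Numerals and the type of natural numbers -/

/-- `nat = μα.(1+α)`. -/
def natTy : Ty := .mu 2 ![.unit, .var 0]

/-- Numerals `n̲`. -/
def numeral : ℕ → Tm
  | 0 => .inj 0 .unit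
  | n + 1 => .inj 1 (numeral n)

/-! ## Operational semantics -/

/-- Labels classifying reduction steps.  `unfold` labels the unfold-fold
(case) reductions, `choice` labels the `? ↦ n̲` reductions. -/
inductive Lbl : Type where
  | beta | projred | tbeta | unfold | choice

/-- Labeled one-step reduction. -/
inductive Step : Tm → Lbl → Tm → Prop where
  | projFst : ∀ {v₁ v₂}, IsVal v₁ → IsVal v₂ →
      Step (.proj false (.pair v₁ v₂)) .projred v₁
  | projSnd : ∀ {v₁ v₂}, IsVal v₁ → IsVal v₂ →
      Step (.proj true (.pair v₁ v₂)) .projred v₂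
  | beta : ∀ {e v}, IsVal v → Step (.app (.lam e) v) .beta (subst1 v e)
  | tbeta : ∀ {e τ}, Step (.tapp (.tlam e) τ) .tbeta (tySubst1 τ e)
  | caseInj : ∀ {m : ℕ} {es : Fin m → Tm} {j : ℕ} {v} (h : j < m), IsVal v →
      Step (.case (.inj j v) m es) .unfold (subst1 v (es ⟨j, h⟩))
  | choice : ∀ n : ℕ, Step .choice .choice (numeral n)
  | appArg : ∀ {v e l e'}, IsVal v → Step e l e' → Step (.app v e) l (.app v e')

/-- One-step reduction `e ↦ e'`. -/
def Red (e e' : Tm) : Prop := ∃ l, Step e l e'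

/-- `StepsU e n e'`: `e ↦* e'` with exactly `n` unfold-fold reductions in
the sequence. -/
inductive StepsU : Tm → ℕ → Tm → Prop where
  | refl : ∀ {e}, StepsU e 0 e
  | unfold : ∀ {e e₁ n e₂}, Step e .unfold e₁ → StepsU e₁ n e₂ → StepsU e (n + 1) e₂
  | other : ∀ {e l e₁ n e₂}, l ≠ .unfold → Step e l e₁ → StepsU e₁ n e₂ → StepsU e n e₂

/-- May-convergence `e↓`. -/
def MayConv (e : Tm) : Prop := ∃ n v, StepsU e n v ∧ IsVal v

/-- `e↓ₙ`: `e` reduces to a value with at most `n` unfold-fold reductions. -/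
def MayConvN (e : Tm) (n : ℕ) : Prop := ∃ m ≤ n, ∃ v, StepsU e m v ∧ IsVal v

/-- `e ⇝¹ e'`: `e ↦* e'` with exactly one unfold-fold reduction. -/
def UnfoldOne (e e' : Tm) : Prop := StepsU e 1 e'

/-- `e ⇝ᵖ e'`: `e ↦* e'` with no choice reductions. -/
inductive PSteps : Tm → Tm → Prop where
  | refl : ∀ {e}, PSteps e e
  | step : ∀ {e l e₁ e₂}, l ≠ .choice → Step e l e₁ → PSteps e₁ e₂ → PSteps e e₂

/-- `e ⇝ᵖ⁰ e'`: `e ↦* e'` with no choice reductions and no unfold-fold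
reductions. -/
inductive P0Steps : Tm → Tm → Prop where
  | refl : ∀ {e}, P0Steps e e
  | step : ∀ {e l e₁ e₂}, l ≠ .choice → l ≠ .unfold → Step e l e₁ →
      P0Steps e₁ e₂ → P0Steps e e₂

/-- Must-convergence `e⇓`: the least predicate closed under the rule
"if every one-step reduct of `e` must-converges then so does `e`". -/
inductive Must : Tm → Prop where
  | intro : ∀ {e}, (∀ e', Red e e' → Must e') → Must e

/-- The least uncountable ordinal `ω₁`. -/
noncomputable def omega1 : Ordinal.{0} := (Cardinal.aleph 1).ord

/-- The stratified predicate `e↯_β`, defined by ordinal induction: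
`e↯_β` iff every one-step reduct `e'` of `e` satisfies `e'↯_ν`
for some `ν < β`. -/
def Lightning (β : Ordinal.{0}) (e : Tm) : Prop :=
  ∀ e', Red e e' → ∃ ν : {ν : Ordinal.{0} // ν < β}, Lightning ν.1 e'
termination_by β
decreasing_by exact ν.2

/-- The stratified must-convergence predicate `e⇓_β`, defined by ordinal
induction: `e⇓_β` iff whenever `e ⇝¹ e'` there is `ν < β` with `e'⇓_ν`. -/
def MustStrat (β : Ordinal.{0}) (e : Tm) : Prop :=
  ∀ e', UnfoldOne e e' → ∃ ν : {ν : Ordinal.{0} // ν < β}, MustStrat ν.1 e'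
termination_by β
decreasing_by exact ν.2

/-! ## Typing -/

/-- `Δ ⊢ Γ`: all types in the context are well-formed in `Δ`. -/
def CtxWf (Δ : ℕ) (Γ : List Ty) : Prop := ∀ τ ∈ Γ, Ty.Wf Δ τ

/-- The typing judgement `Δ;Γ ⊢ e : τ` (`Δ` counts type variables, `Γ` is the
list of types of term variables, innermost first). -/
inductive HasTy : ℕ → List Ty → Tm → Ty → Prop where
  | var : ∀ {Δ Γ x τ}, CtxWf Δ Γ → Γ[x]? = some τ → HasTy Δ Γ (.var x) τ
  | unit : ∀ {Δ Γ}, CtxWf Δ Γ → HasTy Δ Γ .unit .unit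
  | pair : ∀ {Δ Γ v₁ v₂ τ₁ τ₂}, IsVal v₁ → IsVal v₂ →
      HasTy Δ Γ v₁ τ₁ → HasTy Δ Γ v₂ τ₂ → HasTy Δ Γ (.pair v₁ v₂) (.prod τ₁ τ₂)
  | lam : ∀ {Δ Γ e τ₁ τ₂}, Ty.Wf Δ τ₁ → HasTy Δ (τ₁ :: Γ) e τ₂ →
      HasTy Δ Γ (.lam e) (.arrow τ₁ τ₂)
  | inj : ∀ {Δ Γ v} {m : ℕ} {ts : Fin m → Ty} {j : ℕ} (h : j < m), IsVal v →
      Ty.Wf Δ (.mu m ts) →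
      HasTy Δ Γ v (Ty.subst1 (.mu m ts) (ts ⟨j, h⟩)) →
      HasTy Δ Γ (.inj j v) (.mu m ts)
  | tlam : ∀ {Δ Γ e τ}, HasTy (Δ + 1) (Γ.map (Ty.rename Nat.succ)) e τ →
      HasTy Δ Γ (.tlam e) (.all τ)
  | proj : ∀ {Δ Γ v τ₁ τ₂} (b : Bool), IsVal v → HasTy Δ Γ v (.prod τ₁ τ₂) →
      HasTy Δ Γ (.proj b v) (bif b then τ₂ else τ₁)
  | app : ∀ {Δ Γ v e τ₁ τ₂}, IsVal v → HasTy Δ Γ v (.arrow τ₁ τ₂) →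
      HasTy Δ Γ e τ₁ → HasTy Δ Γ (.app v e) τ₂
  | case : ∀ {Δ Γ v τ'} {m : ℕ} {ts : Fin m → Ty} {es : Fin m → Tm}, IsVal v →
      HasTy Δ Γ v (.mu m ts) →
      (∀ j : Fin m, HasTy Δ (Ty.subst1 (.mu m ts) (ts j) :: Γ) (es j) τ') →
      HasTy Δ Γ (.case v m es) τ'
  | tapp : ∀ {Δ Γ v τ σ}, IsVal v → HasTy Δ Γ v (.all τ) → Ty.Wf Δ σ →
      HasTy Δ Γ (.tapp v σ) (Ty.subst1 σ τ)
  | choice : ∀ {Δ Γ}, CtxWf Δ Γ → HasTy Δ Γ .choice natTy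

/-! ## Evaluation contexts -/

/-- Evaluation contexts `E ::= [] | v E` are represented as lists of the
applied values, outermost first. -/
def plug (E : List Tm) (e : Tm) : Tm := E.foldr .app e

/-- Typing of evaluation contexts, `⊢ E : τ ⊸ τ'`. -/
inductive ECtxTy : List Tm → Ty → Ty → Prop where
  | nil : ∀ {τ}, Ty.Wf 0 τ → ECtxTy [] τ τ
  | cons : ∀ {v E τ₁ τ τ₂}, IsVal v → HasTy 0 [] v (.arrow τ τ₂) →
      ECtxTy E τ₁ τ → ECtxTy (v :: E) τ₁ τ₂

/-! ## CIU preorders -/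

/-- A closing type substitution `δ ∈ Type^Δ`. -/
def TySubstOK (Δ : ℕ) (δ : ℕ → Ty) : Prop := ∀ i < Δ, Ty.Wf 0 (δ i)

/-- A type-respecting closing value substitution `γ ∈ Subst(Γ)`. -/
def SubstOK (Γ : List Ty) (γ : ℕ → Tm) : Prop :=
  ∀ i τ, Γ[i]? = some τ → IsVal (γ i) ∧ HasTy 0 [] (γ i) τ

/-- The may-CIU preorder `Δ;Γ ⊢ e ≾↓ciu e' : τ`. -/
def CiuMay (Δ : ℕ) (Γ : List Ty) (e e' : Tm) (τ : Ty) : Prop :=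
  HasTy Δ Γ e τ ∧ HasTy Δ Γ e' τ ∧
  ∀ δ, TySubstOK Δ δ → ∀ γ, SubstOK (Γ.map (Ty.subst δ)) γ →
  ∀ E τ', ECtxTy E (τ.subst δ) τ' →
  MayConv (plug E ((e.tySubst δ).subst γ)) → MayConv (plug E ((e'.tySubst δ).subst γ))

/-- The must-CIU preorder `Δ;Γ ⊢ e ≾⇓ciu e' : τ`. -/
def CiuMust (Δ : ℕ) (Γ : List Ty) (e e' : Tm) (τ : Ty) : Prop :=
  HasTy Δ Γ e τ ∧ HasTy Δ Γ e' τ ∧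
  ∀ δ, TySubstOK Δ δ → ∀ γ, SubstOK (Γ.map (Ty.subst δ)) γ →
  ∀ E τ', ECtxTy E (τ.subst δ) τ' →
  Must (plug E ((e.tySubst δ).subst γ)) → Must (plug E ((e'.tySubst δ).subst γ))

/-! ## Type-indexed relations, precongruences and contextual approximation -/

/-- A type-indexed relation. -/
def TIRel : Type := ℕ → List Ty → Tm → Tm → Ty → Prop

/-- A type-indexed relation relates only well-typed terms. -/
def WellTypedRel (R : TIRel) : Prop :=
  ∀ Δ Γ e e' τ, R Δ Γ e e' τ → HasTy Δ Γ e τ ∧ HasTy Δ Γ e' τ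

def ReflRel (R : TIRel) : Prop := ∀ Δ Γ e τ, HasTy Δ Γ e τ → R Δ Γ e e τ

def TransRel (R : TIRel) : Prop :=
  ∀ Δ Γ e₁ e₂ e₃ τ, R Δ Γ e₁ e₂ τ → R Δ Γ e₂ e₃ τ → R Δ Γ e₁ e₃ τ

/-- The compatibility rules (one for each term former). -/
structure Compatible (R : TIRel) : Prop where
  var : ∀ {Δ Γ x τ}, CtxWf Δ Γ → Γ[x]? = some τ → R Δ Γ (.var x) (.var x) τ
  unit : ∀ {Δ Γ}, CtxWf Δ Γ → R Δ Γ .unit .unit .unit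
  pair : ∀ {Δ Γ v₁ v₂ v₁' v₂' τ₁ τ₂}, IsVal v₁ → IsVal v₂ → IsVal v₁' → IsVal v₂' →
      R Δ Γ v₁ v₁' τ₁ → R Δ Γ v₂ v₂' τ₂ →
      R Δ Γ (.pair v₁ v₂) (.pair v₁' v₂') (.prod τ₁ τ₂)
  lam : ∀ {Δ Γ e e' τ₁ τ₂}, Ty.Wf Δ τ₁ → R Δ (τ₁ :: Γ) e e' τ₂ →
      R Δ Γ (.lam e) (.lam e') (.arrow τ₁ τ₂)
  inj : ∀ {Δ Γ v v'} {m : ℕ} {ts : Fin m → Ty} {j : ℕ} (h : j < m),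
      IsVal v → IsVal v' → Ty.Wf Δ (.mu m ts) →
      R Δ Γ v v' (Ty.subst1 (.mu m ts) (ts ⟨j, h⟩)) →
      R Δ Γ (.inj j v) (.inj j v') (.mu m ts)
  tlam : ∀ {Δ Γ e e' τ}, R (Δ + 1) (Γ.map (Ty.rename Nat.succ)) e e' τ →
      R Δ Γ (.tlam e) (.tlam e') (.all τ)
  proj : ∀ {Δ Γ v v' τ₁ τ₂} (b : Bool), IsVal v → IsVal v' →
      R Δ Γ v v' (.prod τ₁ τ₂) →
      R Δ Γ (.proj b v) (.proj b v') (bif b then τ₂ else τ₁)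
  app : ∀ {Δ Γ v v' e e' τ₁ τ₂}, IsVal v → IsVal v' →
      R Δ Γ v v' (.arrow τ₁ τ₂) → R Δ Γ e e' τ₁ →
      R Δ Γ (.app v e) (.app v' e') τ₂
  case : ∀ {Δ Γ v v' τ'} {m : ℕ} {ts : Fin m → Ty} {es es' : Fin m → Tm},
      IsVal v → IsVal v' → R Δ Γ v v' (.mu m ts) →
      (∀ j : Fin m, R Δ (Ty.subst1 (.mu m ts) (ts j) :: Γ) (es j) (es' j) τ') →
      R Δ Γ (.case v m es) (.case v' m es') τ'
  tapp : ∀ {Δ Γ v v' τ σ}, IsVal v → IsVal v' → R Δ Γ v v' (.all τ) →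
      Ty.Wf Δ σ → R Δ Γ (.tapp v σ) (.tapp v' σ) (Ty.subst1 σ τ)
  choice : ∀ {Δ Γ}, CtxWf Δ Γ → R Δ Γ .choice .choice natTy

/-- May-adequacy. -/
def MayAdequate (R : TIRel) : Prop :=
  ∀ e e' τ, R 0 [] e e' τ → MayConv e → MayConv e'

/-- Must-adequacy. -/
def MustAdequate (R : TIRel) : Prop :=
  ∀ e e' τ, R 0 [] e e' τ → Must e → Must e'

/-- May-contextual approximation `Δ;Γ ⊢ e ≾↓ctx e' : τ`: the largest
may-adequate precongruence. -/
def CtxMay (Δ : ℕ) (Γ : List Ty) (e e' : Tm) (τ : Ty) : Prop :=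
  ∃ R : TIRel, WellTypedRel R ∧ ReflRel R ∧ TransRel R ∧ Compatible R ∧
    MayAdequate R ∧ R Δ Γ e e' τ

/-- Must-contextual approximation `Δ;Γ ⊢ e ≾⇓ctx e' : τ`: the largest
must-adequate precongruence. -/
def CtxMust (Δ : ℕ) (Γ : List Ty) (e e' : Tm) (τ : Ty) : Prop :=
  ∃ R : TIRel, WellTypedRel R ∧ ReflRel R ∧ TransRel R ∧ Compatible R ∧
    MustAdequate R ∧ R Δ Γ e e' τ

/-- May-contextual equivalence `≅↓ctx`. -/
def CtxMayEq (Δ : ℕ) (Γ : List Ty) (e e' : Tm) (τ : Ty) : Prop :=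
  CtxMay Δ Γ e e' τ ∧ CtxMay Δ Γ e' e τ

/-- Must-contextual equivalence `≅⇓ctx`. -/
def CtxMustEq (Δ : ℕ) (Γ : List Ty) (e e' : Tm) (τ : Ty) : Prop :=
  CtxMust Δ Γ e e' τ ∧ CtxMust Δ Γ e' e τ

/-- Contextual equivalence `≅ctx` (intersection of may and must). -/
def CtxEq (Δ : ℕ) (Γ : List Ty) (e e' : Tm) (τ : Ty) : Prop :=
  CtxMayEq Δ Γ e e' τ ∧ CtxMustEq Δ Γ e e' τ

end CountChoice

namespace CountChoice

/-! ## Step-indexed uniform value relations and the may logical relation -/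

/-- Step-indexed relations on terms (indexed over `ω`). -/
def SIRel : Type := ℕ → Tm → Tm → Prop

/-- Extending a relational environment (cons). -/
def consRel (r : SIRel) (ρ : ℕ → SIRel) : ℕ → SIRel
  | 0 => r
  | i + 1 => ρ i

/-- `r ∈ VRel_ω(σ,σ')`: an `ω`-indexed uniform relation on `Val(σ) × Val(σ')`:
it relates only closed values of the given types, its 0-th component is all of
`Val(σ) × Val(σ')`, and it is decreasing in the index. -/
def IsVRel (σ σ' : Ty) (r : SIRel) : Prop :=
  (∀ n v v', r n v v' → (IsVal v ∧ HasTy 0 [] v σ) ∧ (IsVal v' ∧ HasTy 0 [] v' σ')) ∧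
  (∀ v v', IsVal v → HasTy 0 [] v σ → IsVal v' → HasTy 0 [] v' σ' → r 0 v v') ∧
  (∀ n v v', r (n + 1) v v' → r n v v')

/-- The lift `r⊤` of a step-indexed relation to evaluation contexts
(for may-convergence). -/
def sTopMay (r : SIRel) (n : ℕ) (E E' : List Tm) : Prop :=
  ∀ j ≤ n, ∀ v v', r j v v' → MayConvN (plug E v) j → MayConv (plug E' v')

/-- The biorthogonal lift `r⊤⊤` of a step-indexed relation to terms
(for may-convergence). -/
def ttopMay (r : SIRel) : SIRel := fun n e e' =>
  ∀ j ≤ n, ∀ E E', sTopMay r j E E' → MayConvN (plug E e) j → MayConv (plug E' e')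

/-- The may logical relation `⟦τ⟧(r⃗)`, given closing type substitutions
`δ, δ'` and a relational environment `ρ` with `ρ i ∈ VRel_ω(δ i, δ' i)`;
it is an `ω`-indexed uniform relation on `Val(τδ) × Val(τδ')`.
Recursive types are interpreted by the unique (guarded) fixed point
`fix s.⋃ⱼ inⱼ(▷⟦τⱼ⟧(r⃗,s))`, where `(▷R)ₙ = ⋂_{k<n} Rₖ`. -/
def interpMay : Ty → (ℕ → Ty) → (ℕ → Ty) → (ℕ → SIRel) → SIRel
  | .var i, _, _, ρ => ρ i
  | .unit, _, _, _ => fun _ v v' => v = .unit ∧ v' = .unit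
  | .prod τ₁ τ₂, δ, δ', ρ => fun n v v' =>
      ∃ v₁ v₂ v₁' v₂', v = .pair v₁ v₂ ∧ v' = .pair v₁' v₂' ∧
        interpMay τ₁ δ δ' ρ n v₁ v₁' ∧ interpMay τ₂ δ δ' ρ n v₂ v₂'
  | .arrow τ₁ τ₂, δ, δ', ρ => fun n v v' =>
      ∃ e e', v = .lam e ∧ v' = .lam e' ∧
        HasTy 0 [] v ((Ty.arrow τ₁ τ₂).subst δ) ∧
        HasTy 0 [] v' ((Ty.arrow τ₁ τ₂).subst δ') ∧
        ∀ m ≤ n, ∀ u u', interpMay τ₁ δ δ' ρ m u u' →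
          ttopMay (interpMay τ₂ δ δ' ρ) m (subst1 u e) (subst1 u' e')
  | .all τ, δ, δ', ρ => fun n v v' =>
      ∃ e e', v = .tlam e ∧ v' = .tlam e' ∧
        HasTy 0 [] v ((Ty.all τ).subst δ) ∧
        HasTy 0 [] v' ((Ty.all τ).subst δ') ∧
        ∀ σ σ', Ty.Wf 0 σ → Ty.Wf 0 σ' → ∀ r : SIRel, IsVRel σ σ' r →
          ttopMay (interpMay τ (consTy σ δ) (consTy σ' δ') (consRel r ρ)) n
            (tySubst1 σ e) (tySubst1 σ' e')
  | .mu m ts, δ, δ', ρ => fun n =>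
      Nat.strongRecOn (motive := fun _ => Tm → Tm → Prop) n
        (fun n ih v v' =>
          ∃ j, ∃ h : j < m, ∃ u u',
            v = .inj j u ∧ v' = .inj j u' ∧ IsVal u ∧ IsVal u' ∧
            HasTy 0 [] u (Ty.subst (consTy ((Ty.mu m ts).subst δ) δ) (ts ⟨j, h⟩)) ∧
            HasTy 0 [] u' (Ty.subst (consTy ((Ty.mu m ts).subst δ') δ') (ts ⟨j, h⟩)) ∧
            ∀ k, k < n →
              interpMay (ts ⟨j, h⟩)
                (consTy ((Ty.mu m ts).subst δ) δ)
                (consTy ((Ty.mu m ts).subst δ') δ')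
                (consRel (fun i u₁ u₂ => ∃ hi : i < n, ih i hi u₁ u₂) ρ) k u u')

/-- Pointwise relatedness of value substitutions, `(γ,γ') ∈ ⟦Γ⟧(r⃗)ₙ`. -/
def EnvRelMay (Γ : List Ty) (δ δ' : ℕ → Ty) (ρ : ℕ → SIRel) (n : ℕ)
    (γ γ' : ℕ → Tm) : Prop :=
  ∀ i τ, Γ[i]? = some τ → interpMay τ δ δ' ρ n (γ i) (γ' i)

/-- Logical may-approximation `Δ;Γ ⊢ e ≾↓log e' : τ`. -/
def LogMay (Δ : ℕ) (Γ : List Ty) (e e' : Tm) (τ : Ty) : Prop :=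
  HasTy Δ Γ e τ ∧ HasTy Δ Γ e' τ ∧
  ∀ δ δ', TySubstOK Δ δ → TySubstOK Δ δ' →
  ∀ ρ : ℕ → SIRel, (∀ i < Δ, IsVRel (δ i) (δ' i) (ρ i)) →
  ∀ n γ γ', EnvRelMay Γ δ δ' ρ n γ γ' →
  ttopMay (interpMay τ δ δ' ρ) n ((e.tySubst δ).subst γ) ((e'.tySubst δ').subst γ')

end CountChoice

namespace CountChoice

/-! ## Ordinal-indexed uniform value relations and the must logical relation -/

/-- Ordinal-indexed relations on terms. -/
def OSIRel : Type 1 := Ordinal.{0} → Tm → Tm → Prop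

/-- Extending an ordinal-indexed relational environment (cons). -/
def consORel (r : OSIRel) (ρ : ℕ → OSIRel) : ℕ → OSIRel
  | 0 => r
  | i + 1 => ρ i

/-- `r ∈ VRel_ω₁(σ,σ')`: an ordinal-indexed uniform relation on
`Val(σ) × Val(σ')`: it relates only closed values of the given types, its
0-th component is all of `Val(σ) × Val(σ')`, it is decreasing at successors
and it is the intersection of the earlier components at limits. -/
def IsOVRel (σ σ' : Ty) (r : OSIRel) : Prop :=
  (∀ β v v', r β v v' → (IsVal v ∧ HasTy 0 [] v σ) ∧ (IsVal v' ∧ HasTy 0 [] v' σ')) ∧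
  (∀ v v', IsVal v → HasTy 0 [] v σ → IsVal v' → HasTy 0 [] v' σ' → r 0 v v') ∧
  (∀ β v v', r (β + 1) v v' → r β v v') ∧
  (∀ β, Order.IsSuccLimit β → ∀ v v', (r β v v' ↔ ∀ ν < β, r ν v v'))

/-- The lift `r⊤` of an ordinal-indexed relation to evaluation contexts
(for must-convergence). -/
def sTopMust (r : OSIRel) (β : Ordinal.{0}) (E E' : List Tm) : Prop :=
  ∀ ν ≤ β, ∀ v v', r ν v v' → MustStrat ν (plug E v) → Must (plug E' v')

/-- The biorthogonal lift `r⊤⊤` of an ordinal-indexed relation to terms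
(for must-convergence). -/
def ttopMust (r : OSIRel) : OSIRel := fun β e e' =>
  ∀ ν ≤ β, ∀ E E', sTopMust r ν E E' → MustStrat ν (plug E e) → Must (plug E' e')

/-- The must logical relation `⟦τ⟧(r⃗)`, an ordinal-indexed uniform relation,
defined exactly as the may logical relation but with the must-biorthogonal
lifts. -/
def interpMust : Ty → (ℕ → Ty) → (ℕ → Ty) → (ℕ → OSIRel) → OSIRel
  | .var i, _, _, ρ => ρ i
  | .unit, _, _, _ => fun _ v v' => v = .unit ∧ v' = .unit
  | .prod τ₁ τ₂, δ, δ', ρ => fun β v v' =>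
      ∃ v₁ v₂ v₁' v₂', v = .pair v₁ v₂ ∧ v' = .pair v₁' v₂' ∧
        interpMust τ₁ δ δ' ρ β v₁ v₁' ∧ interpMust τ₂ δ δ' ρ β v₂ v₂'
  | .arrow τ₁ τ₂, δ, δ', ρ => fun β v v' =>
      ∃ e e', v = .lam e ∧ v' = .lam e' ∧
        HasTy 0 [] v ((Ty.arrow τ₁ τ₂).subst δ) ∧
        HasTy 0 [] v' ((Ty.arrow τ₁ τ₂).subst δ') ∧
        ∀ ν ≤ β, ∀ u u', interpMust τ₁ δ δ' ρ ν u u' →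
          ttopMust (interpMust τ₂ δ δ' ρ) ν (subst1 u e) (subst1 u' e')
  | .all τ, δ, δ', ρ => fun β v v' =>
      ∃ e e', v = .tlam e ∧ v' = .tlam e' ∧
        HasTy 0 [] v ((Ty.all τ).subst δ) ∧
        HasTy 0 [] v' ((Ty.all τ).subst δ') ∧
        ∀ σ σ', Ty.Wf 0 σ → Ty.Wf 0 σ' → ∀ r : OSIRel, IsOVRel σ σ' r →
          ttopMust (interpMust τ (consTy σ δ) (consTy σ' δ') (consORel r ρ)) β
            (tySubst1 σ e) (tySubst1 σ' e')
  | .mu m ts, δ, δ', ρ => fun β =>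
      (wellFounded_lt (α := Ordinal.{0})).fix
        (C := fun _ => Tm → Tm → Prop)
        (fun β ih v v' =>
          ∃ j, ∃ h : j < m, ∃ u u',
            v = .inj j u ∧ v' = .inj j u' ∧ IsVal u ∧ IsVal u' ∧
            HasTy 0 [] u (Ty.subst (consTy ((Ty.mu m ts).subst δ) δ) (ts ⟨j, h⟩)) ∧
            HasTy 0 [] u' (Ty.subst (consTy ((Ty.mu m ts).subst δ') δ') (ts ⟨j, h⟩)) ∧
            ∀ ν, ν < β →
              interpMust (ts ⟨j, h⟩)
                (consTy ((Ty.mu m ts).subst δ) δ)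
                (consTy ((Ty.mu m ts).subst δ') δ')
                (consORel (fun i u₁ u₂ => ∃ hi : i < β, ih i hi u₁ u₂) ρ) ν u u')
        β

/-- Pointwise relatedness of value substitutions, `(γ,γ') ∈ ⟦Γ⟧(r⃗)_β`. -/
def EnvRelMust (Γ : List Ty) (δ δ' : ℕ → Ty) (ρ : ℕ → OSIRel) (β : Ordinal.{0})
    (γ γ' : ℕ → Tm) : Prop :=
  ∀ i τ, Γ[i]? = some τ → interpMust τ δ δ' ρ β (γ i) (γ' i)

/-- Logical must-approximation `Δ;Γ ⊢ e ≾⇓log e' : τ`. -/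
def LogMust (Δ : ℕ) (Γ : List Ty) (e e' : Tm) (τ : Ty) : Prop :=
  HasTy Δ Γ e τ ∧ HasTy Δ Γ e' τ ∧
  ∀ δ δ', TySubstOK Δ δ → TySubstOK Δ δ' →
  ∀ ρ : ℕ → OSIRel, (∀ i < Δ, IsOVRel (δ i) (δ' i) (ρ i)) →
  ∀ β < omega1, ∀ γ γ', EnvRelMust Γ δ δ' ρ β γ γ' →
  ttopMust (interpMust τ δ δ' ρ) β ((e.tySubst δ).subst γ) ((e'.tySubst δ').subst γ')

end CountChoice

namespace CountChoice

/-! ## Derived terms -/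

/-- `let x = e₁ in e₂`, i.e. `(λx.e₂) e₁`. -/
def letIn (e₁ e₂ : Tm) : Tm := .app (.lam e₂) e₁

/-- The term `δ_f = λy.case y of (in y'. f(λx.let r = y' y in r x))`,
where `f` is the term variable of de Bruijn index 0 outside. -/
def deltaTm : Tm :=
  .lam (.case (.var 0) 1
    ![.app (.var 2)
        (.lam (letIn (.app (.var 1) (.var 2)) (.app (.var 0) (.var 1))))])

/-- The fixed point combinator
`fix = Λα,β.λf.δ_f(in δ_f) : ∀α,β.((α→β)→(α→β))→(α→β)`. -/
def fixTm : Tm := .tlam (.tlam (.lam (.app deltaTm (.inj 0 deltaTm))))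

/-- `fix τ₁ τ₂ v`, i.e. `let x = fix τ₁ in let y = x τ₂ in y v`. -/
def fixApp (τ₁ τ₂ : Ty) (v : Tm) : Tm :=
  letIn (.tapp fixTm τ₁)
    (letIn (.tapp (.var 0) τ₂) (.app (.var 0) (v.rename (· + 2))))

/-- The identity `id = λx.x`. -/
def idTm : Tm := .lam (.var 0)

/-- The divergent term `Ω = Λα.(fix 1 α)(λf.f)⟨⟩ : ∀α.α`. -/
def OmegaTm : Tm :=
  .tlam (letIn (fixApp .unit (.var 0) (.lam (.var 0))) (.app (.var 0) .unit))

/-- Erratic choice `e₁ or e₂`, i.e.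
`let x = ? in case x of (in₁ y.e₁ | in₂ y.e₂)`. -/
def orTm (e₁ e₂ : Tm) : Tm :=
  letIn .choice (.case (.var 0) 2 ![e₁.rename (· + 2), e₂.rename (· + 2)])

/-- Type application of a term: `w τ` abbreviates `let f = w in f τ`. -/
def letTapp (w : Tm) (τ : Ty) : Tm := letIn w (.tapp (.var 0) τ)

/-- `(λx.x t) w`: applies (the eventual value of) `w` to the closed term `t`. -/
def letAppArg (w t : Tm) : Tm := .app (.lam (.app (.var 0) t)) w

end CountChoice

/-!
Let `R` be the compatible closure of the single pair `(f, g)`. Its typed reflexive–transitive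
closure is a precongruence, so `f ≾↓ctx g` follows once `R` is may-adequate. Adequacy is a
simulation on the length of a converging reduction of the left-hand term: a head redex `r` in
`E[r]` is matched by the related redex `r'` in `E'[r']`, except when `r = f u` and `r' = g u'`.
There `f u'` makes the matching step instead, and `E'[f u']↓` gives `E'[g u']↓` because
`f u' ≾↓ctx g u'`. Exchanging `f` and `g` gives the converse.
-/

namespace Relation.ReflTransGen

variable {α : Type*}

theorem lift_of_invariant {β : Type*} {r : α → α → Prop} {p : β → β → Prop} {P : α → Prop}
    {a b : α} (F : α → β) (hP : ∀ x y, P x → r x y → P y)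
    (hF : ∀ x y, P x → r x y → p (F x) (F y)) (h : ReflTransGen r a b) (ha : P a) :
    ReflTransGen p (F a) (F b) := by
  suffices P b ∧ ReflTransGen p (F a) (F b) from this.2
  induction h with
  | refl => exact ⟨ha, .refl⟩
  | tail _ hxy ih => exact ⟨hP _ _ ih.1 hxy, ih.2.tail (hF _ _ ih.1 hxy)⟩

theorem pi {ι : Type*} [Fintype ι] [DecidableEq ι] {r : ι → α → α → Prop} {xs ys : ι → α}
    (h : ∀ i, ReflTransGen (r i) (xs i) (ys i)) :
    ReflTransGen (fun xs ys => ∃ i, r i (xs i) (ys i) ∧ ∀ j ≠ i, xs j = ys j) xs ys := by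
  let S : (ι → α) → (ι → α) → Prop := fun xs ys => ∃ i, r i (xs i) (ys i) ∧ ∀ j ≠ i, xs j = ys j
  have update_step (xs : ι → α) (i : ι) {y : α} (hy : ReflTransGen (r i) (xs i) y) :
      ReflTransGen S xs (Function.update xs i y) := by
    have : ReflTransGen S (Function.update xs i (xs i)) (Function.update xs i y) :=
      hy.lift (Function.update xs i) fun y y' hyy' =>
        ⟨i, by simpa using hyy', fun j hj => by simp [hj]⟩
    rwa [Function.update_eq_self] at this
  suffices ∀ s : Finset ι, ∀ xs : ι → α, (∀ i ∉ s, xs i = ys i) →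
      (∀ i, ReflTransGen (r i) (xs i) (ys i)) → ReflTransGen S xs ys
    from this .univ xs (fun i hi => absurd (Finset.mem_univ i) hi) h
  intro s
  induction s using Finset.induction_on with
  | empty => exact fun xs hxs _ => funext (fun i => hxs i (Finset.notMem_empty i)) ▸ .refl
  | insert a s _ ih =>
      intro xs hxs h
      refine (update_step xs a (h a)).trans (ih _ (fun i hi => ?_) fun i => ?_) <;>
        rcases eq_or_ne i a with rfl | hia
      · simp
      · simpa [hia] using hxs i (by simp [hia, hi])
      · simpa using ReflTransGen.refl
      · simpa [hia] using h i

end Relation.ReflTransGen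

namespace CountChoice

theorem liftR_comp (ρ ρ' : ℕ → ℕ) : liftR ρ' ∘ liftR ρ = liftR (ρ' ∘ ρ) := by
  funext i; cases i <;> rfl

theorem Ty.rename_rename (t : Ty) (ρ ρ' : ℕ → ℕ) :
    (t.rename ρ).rename ρ' = t.rename (ρ' ∘ ρ) := by
  induction t generalizing ρ ρ' with
  | var i => rfl
  | unit => rfl
  | prod a b iha ihb => simp only [Ty.rename, iha, ihb]
  | arrow a b iha ihb => simp only [Ty.rename, iha, ihb]
  | mu m ts ih => simp only [Ty.rename, ih, liftR_comp]
  | all a ih => simp only [Ty.rename, ih, liftR_comp]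

theorem liftS_liftR (δ : ℕ → Ty) (ρ : ℕ → ℕ) :
    (fun i => liftS δ (liftR ρ i)) = liftS (fun i => δ (ρ i)) := by
  funext i; cases i <;> rfl

theorem Ty.subst_rename (t : Ty) (ρ : ℕ → ℕ) (δ : ℕ → Ty) :
    (t.rename ρ).subst δ = t.subst (fun i => δ (ρ i)) := by
  induction t generalizing ρ δ with
  | var i => rfl
  | unit => rfl
  | prod a b iha ihb => simp only [Ty.rename, Ty.subst, iha, ihb]
  | arrow a b iha ihb => simp only [Ty.rename, Ty.subst, iha, ihb]
  | mu m ts ih => simp only [Ty.rename, Ty.subst, ih, liftS_liftR]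
  | all a ih => simp only [Ty.rename, Ty.subst, ih, liftS_liftR]

theorem liftS_rename (δ : ℕ → Ty) (ρ : ℕ → ℕ) :
    (fun i => (liftS δ i).rename (liftR ρ)) = liftS (fun i => (δ i).rename ρ) := by
  funext i
  cases i with
  | zero => rfl
  | succ i =>
      show ((δ i).rename Nat.succ).rename (liftR ρ) = ((δ i).rename ρ).rename Nat.succ
      rw [Ty.rename_rename, Ty.rename_rename]
      rfl

theorem Ty.rename_subst (t : Ty) (δ : ℕ → Ty) (ρ : ℕ → ℕ) :
    (t.subst δ).rename ρ = t.subst (fun i => (δ i).rename ρ) := by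
  induction t generalizing δ ρ with
  | var i => rfl
  | unit => rfl
  | prod a b iha ihb => simp only [Ty.rename, Ty.subst, iha, ihb]
  | arrow a b iha ihb => simp only [Ty.rename, Ty.subst, iha, ihb]
  | mu m ts ih => simp only [Ty.rename, Ty.subst, ih, liftS_rename]
  | all a ih => simp only [Ty.rename, Ty.subst, ih, liftS_rename]

theorem liftS_subst (δ δ' : ℕ → Ty) :
    (fun i => (liftS δ i).subst (liftS δ')) = liftS (fun i => (δ i).subst δ') := by
  funext i
  cases i with
  | zero => rfl
  | succ i =>
      show ((δ i).rename Nat.succ).subst (liftS δ') = ((δ i).subst δ').rename Nat.succ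
      rw [Ty.subst_rename, Ty.rename_subst]
      rfl

theorem Ty.subst_subst (t : Ty) (δ δ' : ℕ → Ty) :
    (t.subst δ).subst δ' = t.subst (fun i => (δ i).subst δ') := by
  induction t generalizing δ δ' with
  | var i => rfl
  | unit => rfl
  | prod a b iha ihb => simp only [Ty.subst, iha, ihb]
  | arrow a b iha ihb => simp only [Ty.subst, iha, ihb]
  | mu m ts ih => simp only [Ty.subst, ih, liftS_subst]
  | all a ih => simp only [Ty.subst, ih, liftS_subst]

theorem map_rename_succ_subst_liftS (Γ : List Ty) (δ : ℕ → Ty) :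
    (Γ.map (Ty.rename Nat.succ)).map (Ty.subst (liftS δ)) =
      (Γ.map (Ty.subst δ)).map (Ty.rename Nat.succ) := by
  simp only [List.map_map]
  refine List.map_congr_left fun t _ => ?_
  exact (Ty.subst_rename _ _ _).trans (Ty.rename_subst _ _ _).symm

theorem liftS_var_comp (ρ : ℕ → ℕ) : liftS (Ty.var ∘ ρ) = Ty.var ∘ liftR ρ := by
  funext i; cases i <;> rfl

theorem Ty.rename_eq_subst (ρ : ℕ → ℕ) : Ty.rename ρ = Ty.subst (Ty.var ∘ ρ) := by
  funext t
  induction t generalizing ρ with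
  | var i => rfl
  | unit => rfl
  | prod a b iha ihb => simp only [Ty.rename, Ty.subst, iha, ihb]
  | arrow a b iha ihb => simp only [Ty.rename, Ty.subst, iha, ihb]
  | mu m ts ih => simp only [Ty.rename, Ty.subst, ih, liftS_var_comp]
  | all a ih => simp only [Ty.rename, Ty.subst, ih, liftS_var_comp]

theorem liftS_var : liftS Ty.var = Ty.var := by
  funext i; cases i <;> rfl

theorem Ty.subst_var (t : Ty) : t.subst Ty.var = t := by
  induction t with
  | var i => rfl
  | unit => rfl
  | prod a b iha ihb => simp only [Ty.subst, iha, ihb]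
  | arrow a b iha ihb => simp only [Ty.subst, iha, ihb]
  | mu m ts ih => simp only [Ty.subst, liftS_var, ih]
  | all a ih => simp only [Ty.subst, liftS_var, ih]

theorem Ty.subst1_subst (M t : Ty) (δ : ℕ → Ty) :
    (Ty.subst1 M t).subst δ = Ty.subst1 (M.subst δ) (t.subst (liftS δ)) := by
  simp only [Ty.subst1, Ty.subst_subst]
  congr 1; funext i
  cases i with
  | zero => rfl
  | succ i =>
      show δ i = ((δ i).rename Nat.succ).subst (consTy (M.subst δ) Ty.var)
      rw [Ty.subst_rename]
      exact (Ty.subst_var (δ i)).symm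

theorem liftR_lt {Δ Δ' : ℕ} {ρ : ℕ → ℕ} (hρ : ∀ i < Δ, ρ i < Δ') :
    ∀ i < Δ + 1, liftR ρ i < Δ' + 1
  | 0, _ => Nat.succ_pos _
  | i + 1, hi => Nat.succ_lt_succ (hρ i (Nat.lt_of_succ_lt_succ hi))

theorem Ty.Wf.rename {t : Ty} {Δ Δ' : ℕ} {ρ : ℕ → ℕ} (h : t.Wf Δ)
    (hρ : ∀ i < Δ, ρ i < Δ') : (t.rename ρ).Wf Δ' := by
  induction t generalizing Δ Δ' ρ with
  | var i => exact hρ i h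
  | unit => trivial
  | prod a b iha ihb => exact ⟨iha h.1 hρ, ihb h.2 hρ⟩
  | arrow a b iha ihb => exact ⟨iha h.1 hρ, ihb h.2 hρ⟩
  | mu m ts ih => exact fun j => ih j (h j) (liftR_lt hρ)
  | all a ih => exact ih h (liftR_lt hρ)

theorem liftS_wf {Δ Δ' : ℕ} {δ : ℕ → Ty} (hδ : ∀ i < Δ, (δ i).Wf Δ') :
    ∀ i < Δ + 1, (liftS δ i).Wf (Δ' + 1)
  | 0, _ => Nat.succ_pos _
  | i + 1, hi => (hδ i (Nat.lt_of_succ_lt_succ hi)).rename fun _ => Nat.succ_lt_succ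

theorem Ty.Wf.subst {t : Ty} {Δ Δ' : ℕ} {δ : ℕ → Ty} (h : t.Wf Δ)
    (hδ : ∀ i < Δ, (δ i).Wf Δ') : (t.subst δ).Wf Δ' := by
  induction t generalizing Δ Δ' δ with
  | var i => exact hδ i h
  | unit => trivial
  | prod a b iha ihb => exact ⟨iha h.1 hδ, ihb h.2 hδ⟩
  | arrow a b iha ihb => exact ⟨iha h.1 hδ, ihb h.2 hδ⟩
  | mu m ts ih => exact fun j => ih j (h j) (liftS_wf hδ)
  | all a ih => exact ih h (liftS_wf hδ)

theorem Ty.Wf.mono {t : Ty} {Δ Δ' : ℕ} (h : t.Wf Δ) (hle : Δ ≤ Δ') : t.Wf Δ' := by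
  induction t generalizing Δ Δ' with
  | var i => exact Nat.lt_of_lt_of_le h hle
  | unit => trivial
  | prod a b iha ihb => exact ⟨iha h.1 hle, ihb h.2 hle⟩
  | arrow a b iha ihb => exact ⟨iha h.1 hle, ihb h.2 hle⟩
  | mu m ts ih => exact fun j => ih j (h j) (Nat.succ_le_succ hle)
  | all a ih => exact ih h (Nat.succ_le_succ hle)

theorem liftR_lt_iff {Δ Δ' : ℕ} {ρ : ℕ → ℕ} (hρ : ∀ i, i < Δ ↔ ρ i < Δ') :
    ∀ i, i < Δ + 1 ↔ liftR ρ i < Δ' + 1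
  | 0 => by simp [liftR]
  | i + 1 => by simpa [liftR] using hρ i

theorem Ty.wf_rename_iff {t : Ty} {Δ Δ' : ℕ} {ρ : ℕ → ℕ}
    (hρ : ∀ i, i < Δ ↔ ρ i < Δ') : (t.rename ρ).Wf Δ' ↔ t.Wf Δ := by
  induction t generalizing Δ Δ' ρ with
  | var i => exact (hρ i).symm
  | unit => exact Iff.rfl
  | prod a b iha ihb => exact and_congr (iha hρ) (ihb hρ)
  | arrow a b iha ihb => exact and_congr (iha hρ) (ihb hρ)
  | mu m ts ih => exact forall_congr' fun j => ih j (liftR_lt_iff hρ)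
  | all a ih => exact ih (liftR_lt_iff hρ)

theorem liftS_eq_var {Δ : ℕ} {δ : ℕ → Ty} (hδ : ∀ i < Δ, δ i = .var i) :
    ∀ i < Δ + 1, liftS δ i = .var i
  | 0, _ => rfl
  | i + 1, hi => by rw [liftS, hδ i (Nat.lt_of_succ_lt_succ hi)]; rfl

theorem Ty.subst_eq_of_wf {t : Ty} {Δ : ℕ} {δ : ℕ → Ty} (h : t.Wf Δ)
    (hδ : ∀ i < Δ, δ i = .var i) : t.subst δ = t := by
  induction t generalizing Δ δ with
  | var i => exact hδ i h
  | unit => rfl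
  | prod a b iha ihb => simp only [Ty.subst, iha h.1 hδ, ihb h.2 hδ]
  | arrow a b iha ihb => simp only [Ty.subst, iha h.1 hδ, ihb h.2 hδ]
  | mu m ts ih => simp only [Ty.subst, fun j => ih j (h j) (liftS_eq_var hδ)]
  | all a ih => simp only [Ty.subst, ih h (liftS_eq_var hδ)]

theorem Ty.subst_eq_of_wf_zero {t : Ty} (h : t.Wf 0) (δ : ℕ → Ty) : t.subst δ = t :=
  Ty.subst_eq_of_wf h fun _ hi => absurd hi (Nat.not_lt_zero _)

theorem liftT_var_comp (ρ : ℕ → ℕ) : liftT (Tm.var ∘ ρ) = Tm.var ∘ liftR ρ := by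
  funext i; cases i <;> rfl

theorem Tm.rename_eq_subst (ρ : ℕ → ℕ) : Tm.rename ρ = Tm.subst (Tm.var ∘ ρ) := by
  funext e
  induction e generalizing ρ with
  | var i => rfl
  | unit => rfl
  | pair a b iha ihb => simp only [Tm.rename, Tm.subst, iha, ihb]
  | lam e ih => simp only [Tm.rename, Tm.subst, ih, liftT_var_comp]
  | inj j v ih => simp only [Tm.rename, Tm.subst, ih]
  | tlam e ih => simp only [Tm.rename, Tm.subst, ih]; rfl
  | choice => rfl
  | proj b v ih => simp only [Tm.rename, Tm.subst, ih]
  | app a b iha ihb => simp only [Tm.rename, Tm.subst, iha, ihb]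
  | case v m es ihv ihs => simp only [Tm.rename, Tm.subst, ihv, ihs, liftT_var_comp]
  | tapp v τ ih => simp only [Tm.rename, Tm.subst, ih]

theorem Tm.tyRename_eq_tySubst (ρ : ℕ → ℕ) : Tm.tyRename ρ = Tm.tySubst (Ty.var ∘ ρ) := by
  funext e
  induction e generalizing ρ with
  | var i => rfl
  | unit => rfl
  | pair a b iha ihb => simp only [Tm.tyRename, Tm.tySubst, iha, ihb]
  | lam e ih => simp only [Tm.tyRename, Tm.tySubst, ih]
  | inj j v ih => simp only [Tm.tyRename, Tm.tySubst, ih]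
  | tlam e ih => simp only [Tm.tyRename, Tm.tySubst, ih, liftS_var_comp]
  | choice => rfl
  | proj b v ih => simp only [Tm.tyRename, Tm.tySubst, ih]
  | app a b iha ihb => simp only [Tm.tyRename, Tm.tySubst, iha, ihb]
  | case v m es ihv ihs => simp only [Tm.tyRename, Tm.tySubst, ihv, ihs]
  | tapp v τ ih => simp only [Tm.tyRename, Tm.tySubst, ih, Ty.rename_eq_subst]

theorem IsVal.subst {v : Tm} (h : IsVal v) {γ : ℕ → Tm} (hγ : ∀ i, IsVal (γ i)) :
    IsVal (v.subst γ) := by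
  induction h with
  | var => exact hγ _
  | unit => exact .unit
  | pair _ _ ih₁ ih₂ => exact .pair ih₁ ih₂
  | lam => exact .lam
  | inj _ ih => exact .inj ih
  | tlam => exact .tlam

theorem IsVal.rename {v : Tm} (h : IsVal v) (ρ : ℕ → ℕ) : IsVal (v.rename ρ) := by
  rw [Tm.rename_eq_subst]; exact h.subst fun _ => .var

theorem IsVal.tySubst {v : Tm} (h : IsVal v) (δ : ℕ → Ty) : IsVal (v.tySubst δ) := by
  induction h with
  | var => exact .var
  | unit => exact .unit
  | pair _ _ ih₁ ih₂ => exact .pair ih₁ ih₂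
  | lam => exact .lam
  | inj _ ih => exact .inj ih
  | tlam => exact .tlam

theorem IsVal.tyRename {v : Tm} (h : IsVal v) (ρ : ℕ → ℕ) : IsVal (v.tyRename ρ) := by
  rw [Tm.tyRename_eq_tySubst]; exact h.tySubst _

theorem IsVal.liftT {γ : ℕ → Tm} (hγ : ∀ i, IsVal (γ i)) : ∀ i, IsVal (liftT γ i)
  | 0 => .var
  | i + 1 => (hγ i).rename _

theorem getElem?_lt {Γ : List Ty} {x : ℕ} {A : Ty} (h : Γ[x]? = some A) : x < Γ.length :=
  (List.getElem?_eq_some_iff.1 h).1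

theorem getElem?_cons_liftR {Γ Γ' : List Ty} {ρ : ℕ → ℕ}
    (hρ : ∀ i B, Γ[i]? = some B → Γ'[ρ i]? = some B) (A : Ty) :
    ∀ i B, (A :: Γ)[i]? = some B → (A :: Γ')[liftR ρ i]? = some B
  | 0, _, h => h
  | i + 1, B, h => hρ i B h

theorem liftT_eq_var {n : ℕ} {γ : ℕ → Tm} (hγ : ∀ i < n, γ i = .var i) :
    ∀ i < n + 1, liftT γ i = .var i
  | 0, _ => rfl
  | i + 1, hi => by rw [liftT, hγ i (Nat.lt_of_succ_lt_succ hi)]; rfl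

theorem HasTy.subst_eq_self {Δ : ℕ} {Γ : List Ty} {e : Tm} {A : Ty} (h : HasTy Δ Γ e A)
    {γ : ℕ → Tm} (hγ : ∀ i < Γ.length, γ i = .var i) : e.subst γ = e := by
  induction h generalizing γ with
  | var _ hx => exact hγ _ (getElem?_lt hx)
  | unit | choice => rfl
  | pair _ _ _ _ ih₁ ih₂ => simp only [Tm.subst, ih₁ hγ, ih₂ hγ]
  | lam _ _ ih => simp only [Tm.subst, ih (liftT_eq_var hγ)]
  | inj _ _ _ _ ih | proj _ _ _ ih | tapp _ _ _ ih => simp only [Tm.subst, ih hγ]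
  | tlam _ ih =>
      simp only [Tm.subst]
      rw [ih fun i hi => by rw [hγ i (by simpa using hi)]; rfl]
  | app _ _ _ ih₁ ih₂ => simp only [Tm.subst, ih₁ hγ, ih₂ hγ]
  | case _ _ _ ihv ihs => simp only [Tm.subst, ihv hγ, ihs _ (liftT_eq_var hγ)]

theorem HasTy.tySubst_eq_self {Δ : ℕ} {Γ : List Ty} {e : Tm} {A : Ty} (h : HasTy Δ Γ e A)
    {δ : ℕ → Ty} (hδ : ∀ i < Δ, δ i = .var i) : e.tySubst δ = e := by
  induction h generalizing δ with
  | var | unit | choice => rfl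
  | pair _ _ _ _ ih₁ ih₂ => simp only [Tm.tySubst, ih₁ hδ, ih₂ hδ]
  | lam _ _ ih | inj _ _ _ _ ih | proj _ _ _ ih => simp only [Tm.tySubst, ih hδ]
  | tlam _ ih => simp only [Tm.tySubst, ih (liftS_eq_var hδ)]
  | app _ _ _ ih₁ ih₂ => simp only [Tm.tySubst, ih₁ hδ, ih₂ hδ]
  | case _ _ _ ihv ihs => simp only [Tm.tySubst, ihv hδ, ihs _ hδ]
  | tapp _ _ hw ih => simp only [Tm.tySubst, ih hδ, Ty.subst_eq_of_wf hw hδ]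

theorem HasTy.subst_eq_self_of_nil {e : Tm} {A : Ty} (h : HasTy 0 [] e A) (γ : ℕ → Tm) :
    e.subst γ = e :=
  h.subst_eq_self fun _ hi => absurd hi (Nat.not_lt_zero _)

theorem HasTy.rename_eq_self_of_nil {e : Tm} {A : Ty} (h : HasTy 0 [] e A) (ρ : ℕ → ℕ) :
    e.rename ρ = e := by
  rw [Tm.rename_eq_subst]; exact h.subst_eq_self_of_nil _

theorem HasTy.tySubst_eq_self_of_nil {e : Tm} {A : Ty} (h : HasTy 0 [] e A) (δ : ℕ → Ty) :
    e.tySubst δ = e :=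
  h.tySubst_eq_self fun _ hi => absurd hi (Nat.not_lt_zero _)

theorem CtxWf.nil {Δ : ℕ} : CtxWf Δ [] := fun _ h => nomatch h

theorem CtxWf.cons {Δ : ℕ} {A : Ty} {Γ : List Ty} (hA : A.Wf Δ) (hΓ : CtxWf Δ Γ) :
    CtxWf Δ (A :: Γ) := by
  intro B hB
  rcases List.mem_cons.1 hB with rfl | hB
  · exact hA
  · exact hΓ B hB

theorem CtxWf.of_cons {Δ : ℕ} {A : Ty} {Γ : List Ty} (h : CtxWf Δ (A :: Γ)) : CtxWf Δ Γ :=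
  fun B hB => h B (List.mem_cons_of_mem _ hB)

theorem CtxWf.map_subst {Δ Δ' : ℕ} {Γ : List Ty} {δ : ℕ → Ty} (hΓ : CtxWf Δ Γ)
    (hδ : ∀ i < Δ, (δ i).Wf Δ') : CtxWf Δ' (Γ.map (Ty.subst δ)) := by
  intro A hA
  obtain ⟨B, hB, rfl⟩ := List.mem_map.1 hA
  exact (hΓ B hB).subst hδ

theorem CtxWf.map_rename_succ {Δ : ℕ} {Γ : List Ty} (hΓ : CtxWf Δ Γ) :
    CtxWf (Δ + 1) (Γ.map (Ty.rename Nat.succ)) := by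
  intro A hA
  obtain ⟨B, hB, rfl⟩ := List.mem_map.1 hA
  exact (hΓ B hB).rename fun _ => Nat.succ_lt_succ

theorem CtxWf.of_map_rename_succ {Δ : ℕ} {Γ : List Ty}
    (h : CtxWf (Δ + 1) (Γ.map (Ty.rename Nat.succ))) : CtxWf Δ Γ :=
  fun _ hA => (Ty.wf_rename_iff fun _ => Nat.succ_lt_succ_iff.symm).1
    (h _ (List.mem_map_of_mem hA))

theorem HasTy.ctxWf {Δ : ℕ} {Γ : List Ty} {e : Tm} {A : Ty} (h : HasTy Δ Γ e A) :
    CtxWf Δ Γ := by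
  induction h with
  | var hΓ _ | unit hΓ | choice hΓ => exact hΓ
  | pair _ _ _ _ ih _ | inj _ _ _ _ ih | proj _ _ _ ih | app _ _ _ ih _
  | case _ _ _ ih _ | tapp _ _ _ ih => exact ih
  | lam _ _ ih => exact ih.of_cons
  | tlam _ ih => exact ih.of_map_rename_succ

theorem HasTy.weaken_append {Δ : ℕ} {Γ : List Ty} {e : Tm} {A : Ty} (h : HasTy Δ Γ e A)
    {Δ' : ℕ} {Γ' : List Ty} (hle : Δ ≤ Δ') (hwf : CtxWf Δ' (Γ ++ Γ')) :
    HasTy Δ' (Γ ++ Γ') e A := by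
  induction h generalizing Δ' Γ' with
  | var _ hx => exact .var hwf (by rw [List.getElem?_append_left (getElem?_lt hx)]; exact hx)
  | unit _ => exact .unit hwf
  | choice _ => exact .choice hwf
  | pair h₁ h₂ _ _ ih₁ ih₂ => exact .pair h₁ h₂ (ih₁ hle hwf) (ih₂ hle hwf)
  | lam hw _ ih => exact .lam (hw.mono hle) (ih hle (hwf.cons (hw.mono hle)))
  | inj hj hv hw _ ih => exact .inj hj hv (hw.mono hle) (ih hle hwf)
  | tlam _ ih =>
      refine .tlam ?_
      rw [List.map_append]
      exact ih (Nat.succ_le_succ hle) (by rw [← List.map_append]; exact hwf.map_rename_succ)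
  | proj b hv _ ih => exact .proj b hv (ih hle hwf)
  | app hv _ _ ih₁ ih₂ => exact .app hv (ih₁ hle hwf) (ih₂ hle hwf)
  | case hv _ hts ihv ihs =>
      exact .case hv (ihv hle hwf) fun j =>
        ihs j hle (hwf.cons (((hts j).ctxWf _ List.mem_cons_self).mono hle))
  | tapp hv _ hw ih => exact .tapp hv (ih hle hwf) (hw.mono hle)

theorem HasTy.weaken {e : Tm} {A : Ty} (h : HasTy 0 [] e A) {Δ : ℕ} {Γ : List Ty}
    (hΓ : CtxWf Δ Γ) : HasTy Δ Γ e A :=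
  h.weaken_append (Γ' := Γ) (Nat.zero_le Δ) hΓ

theorem HasTy.lam_inv {Δ : ℕ} {Γ : List Ty} {e : Tm} {A B : Ty}
    (h : HasTy Δ Γ (.lam e) (.arrow A B)) : HasTy Δ (A :: Γ) e B := by
  cases h; assumption

theorem natTy_wf (Δ : ℕ) : natTy.Wf Δ := by
  intro j
  fin_cases j
  · trivial
  · exact Nat.succ_pos Δ

theorem numeral_isVal (n : ℕ) : IsVal (numeral n) := by
  induction n with
  | zero => exact .inj .unit
  | succ n ih => exact .inj ih

theorem numeral_hasTy (n : ℕ) : HasTy 0 [] (numeral n) natTy := by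
  induction n with
  | zero => exact .inj (j := 0) (by decide) .unit (natTy_wf 0) (.unit CtxWf.nil)
  | succ n ih => exact .inj (j := 1) (by decide) (numeral_isVal n) (natTy_wf 0) (by exact ih)

inductive HeadStep : Tm → Lbl → Tm → Prop where
  | projFst : ∀ {v₁ v₂}, IsVal v₁ → IsVal v₂ → HeadStep (.proj false (.pair v₁ v₂)) .projred v₁
  | projSnd : ∀ {v₁ v₂}, IsVal v₁ → IsVal v₂ → HeadStep (.proj true (.pair v₁ v₂)) .projred v₂
  | beta : ∀ {e v}, IsVal v → HeadStep (.app (.lam e) v) .beta (subst1 v e)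
  | tbeta : ∀ {e A}, HeadStep (.tapp (.tlam e) A) .tbeta (tySubst1 A e)
  | caseInj : ∀ {m : ℕ} {es : Fin m → Tm} {j : ℕ} {v} (h : j < m), IsVal v →
      HeadStep (.case (.inj j v) m es) .unfold (subst1 v (es ⟨j, h⟩))
  | choice : ∀ n : ℕ, HeadStep .choice .choice (numeral n)

theorem plug_cons (v : Tm) (E : List Tm) (e : Tm) : plug (v :: E) e = .app v (plug E e) := rfl

theorem HeadStep.step {r r' : Tm} {l : Lbl} (h : HeadStep r l r') : Step r l r' := by
  cases h with
  | projFst h₁ h₂ => exact .projFst h₁ h₂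
  | projSnd h₁ h₂ => exact .projSnd h₁ h₂
  | beta hv => exact .beta hv
  | tbeta => exact .tbeta
  | caseInj hj hv => exact .caseInj hj hv
  | choice n => exact .choice n

theorem Step.exists_plug_headStep {T S : Tm} {l : Lbl} (h : Step T l S) :
    ∃ E r r', (∀ v ∈ E, IsVal v) ∧ T = plug E r ∧ S = plug E r' ∧ HeadStep r l r' := by
  induction h with
  | projFst h₁ h₂ => exact ⟨[], _, _, nofun, rfl, rfl, .projFst h₁ h₂⟩
  | projSnd h₁ h₂ => exact ⟨[], _, _, nofun, rfl, rfl, .projSnd h₁ h₂⟩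
  | beta hv => exact ⟨[], _, _, nofun, rfl, rfl, .beta hv⟩
  | tbeta => exact ⟨[], _, _, nofun, rfl, rfl, .tbeta⟩
  | caseInj hj hv => exact ⟨[], _, _, nofun, rfl, rfl, .caseInj hj hv⟩
  | choice n => exact ⟨[], _, _, nofun, rfl, rfl, .choice n⟩
  | appArg hv _ ih =>
      obtain ⟨E, r, r', hE, rfl, rfl, hr⟩ := ih
      refine ⟨_ :: E, r, r', fun w hw => ?_, rfl, rfl, hr⟩
      rcases List.mem_cons.1 hw with rfl | hw
      exacts [hv, hE w hw]

theorem Step.plug {E : List Tm} (hE : ∀ v ∈ E, IsVal v) {r r' : Tm} {l : Lbl}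
    (h : Step r l r') : Step (plug E r) l (plug E r') := by
  induction E with
  | nil => exact h
  | cons v E ih =>
      exact .appArg (hE v List.mem_cons_self) (ih fun w hw => hE w (List.mem_cons_of_mem _ hw))

theorem MayConv.of_isVal {v : Tm} (h : IsVal v) : MayConv v := ⟨0, v, .refl, h⟩

theorem MayConv.of_step {a b : Tm} {l : Lbl} (h : Step a l b) (hb : MayConv b) : MayConv a := by
  obtain ⟨n, w, hbw, hw⟩ := hb
  by_cases hl : l = .unfold
  · subst hl; exact ⟨n + 1, w, .unfold h hbw, hw⟩
  · exact ⟨n, w, .other hl h hbw, hw⟩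

def TIRel.ValPreserving (R : TIRel) : Prop := ∀ Δ Γ a b A, R Δ Γ a b A → IsVal a → IsVal b

def TIRel.reflTransClosure (R : TIRel) : TIRel := fun Δ Γ a b A =>
  HasTy Δ Γ a A ∧ Relation.ReflTransGen (fun x y => R Δ Γ x y A) a b

namespace TIRel

variable {R : TIRel}

theorem hasTy_of_reflTransGen (hwt : WellTypedRel R) {Δ : ℕ} {Γ : List Ty} {a b : Tm}
    {A : Ty} (h : Relation.ReflTransGen (fun x y => R Δ Γ x y A) a b) (ha : HasTy Δ Γ a A) :
    HasTy Δ Γ b A := by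
  induction h with
  | refl => exact ha
  | tail _ hxy _ => exact (hwt _ _ _ _ _ hxy).2

theorem wellTypedRel_reflTransClosure (hwt : WellTypedRel R) :
    WellTypedRel R.reflTransClosure :=
  fun _ _ _ _ _ ⟨ha, h⟩ => ⟨ha, hasTy_of_reflTransGen hwt h ha⟩

theorem reflRel_reflTransClosure : ReflRel R.reflTransClosure :=
  fun _ _ _ _ h => ⟨h, .refl⟩

theorem transRel_reflTransClosure : TransRel R.reflTransClosure :=
  fun _ _ _ _ _ _ ⟨h₁, c₁⟩ ⟨_, c₂⟩ => ⟨h₁, c₁.trans c₂⟩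

theorem mayAdequate_reflTransClosure (hadeq : MayAdequate R) :
    MayAdequate R.reflTransClosure := by
  rintro a b A ⟨_, h⟩ ha
  induction h with
  | refl => exact ha
  | tail _ hxy ih => exact hadeq _ _ _ hxy ih

theorem reflTransGen_map_of_isVal (hval : R.ValPreserving) {Δ : ℕ} {Γ : List Ty} {a b : Tm}
    {A : Ty} {p : Tm → Tm → Prop} (F : Tm → Tm)
    (hF : ∀ x y, IsVal x → IsVal y → R Δ Γ x y A → p (F x) (F y))
    (h : Relation.ReflTransGen (fun x y => R Δ Γ x y A) a b) (ha : IsVal a) :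
    Relation.ReflTransGen p (F a) (F b) :=
  h.lift_of_invariant F (fun _ _ hx hxy => hval _ _ _ _ _ hxy hx)
    (fun x y hx hxy => hF x y hx (hval _ _ _ _ _ hxy hx) hxy) ha

theorem reflTransGen_case_of_branches (hwt : WellTypedRel R) (hrefl : ReflRel R)
    (hcomp : Compatible R) {Δ : ℕ} {Γ : List Ty} {v : Tm} {A : Ty} {m : ℕ} {ts : Fin m → Ty}
    {es es' : Fin m → Tm} (hv : IsVal v) (htv : HasTy Δ Γ v (.mu m ts))
    (hbr : ∀ j, R.reflTransClosure Δ (Ty.subst1 (.mu m ts) (ts j) :: Γ) (es j) (es' j) A) :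
    Relation.ReflTransGen (fun x y => R Δ Γ x y A) (.case v m es) (.case v m es') := by
  refine (Relation.ReflTransGen.pi fun j => (hbr j).2).lift_of_invariant (Tm.case v m)
    (P := fun xs => ∀ j, HasTy Δ (Ty.subst1 (.mu m ts) (ts j) :: Γ) (xs j) A) ?_ ?_
    fun j => (hbr j).1
  · rintro xs ys hxs ⟨i, hi, heq⟩ j
    by_cases hji : j = i
    · subst hji; exact (hwt _ _ _ _ _ hi).2
    · exact heq j hji ▸ hxs j
  · rintro xs ys hxs ⟨i, hi, heq⟩
    refine hcomp.case hv hv (hrefl _ _ _ _ htv) fun j => ?_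
    by_cases hji : j = i
    · subst hji; exact hi
    · exact heq j hji ▸ hrefl _ _ _ _ (hxs j)

theorem compatible_reflTransClosure (hwt : WellTypedRel R) (hrefl : ReflRel R)
    (hcomp : Compatible R) (hval : R.ValPreserving) : Compatible R.reflTransClosure := by
  constructor
  case var => exact fun hΓ hx => ⟨.var hΓ hx, .refl⟩
  case unit => exact fun hΓ => ⟨.unit hΓ, .refl⟩
  case choice => exact fun hΓ => ⟨.choice hΓ, .refl⟩
  case pair =>
    rintro Δ Γ v₁ v₂ v₁' v₂' A₁ A₂ hv₁ hv₂ hv₁' hv₂' ⟨ht₁, c₁⟩ ⟨ht₂, c₂⟩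
    have ht₁' := hasTy_of_reflTransGen hwt c₁ ht₁
    refine ⟨.pair hv₁ hv₂ ht₁ ht₂, .trans (b := .pair v₁' v₂) ?_ ?_⟩
    · exact reflTransGen_map_of_isVal hval (.pair · v₂)
        (fun x y hx hy hxy => hcomp.pair hx hv₂ hy hv₂ hxy (hrefl _ _ _ _ ht₂)) c₁ hv₁
    · exact reflTransGen_map_of_isVal hval (.pair v₁' ·)
        (fun x y hx hy hxy => hcomp.pair hv₁' hx hv₁' hy (hrefl _ _ _ _ ht₁') hxy) c₂ hv₂
  case lam =>
    rintro Δ Γ e e' A₁ A₂ hw ⟨ht, c⟩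
    exact ⟨.lam hw ht, c.lift Tm.lam fun _ _ => hcomp.lam hw⟩
  case inj =>
    rintro Δ Γ v v' m ts j hj hv hv' hw ⟨ht, c⟩
    exact ⟨.inj hj hv hw ht,
      reflTransGen_map_of_isVal hval (.inj j) (fun _ _ hx hy => hcomp.inj hj hx hy hw) c hv⟩
  case tlam =>
    rintro Δ Γ e e' A ⟨ht, c⟩
    exact ⟨.tlam ht, c.lift Tm.tlam fun _ _ => hcomp.tlam⟩
  case proj =>
    rintro Δ Γ v v' A₁ A₂ b hv hv' ⟨ht, c⟩
    exact ⟨.proj b hv ht,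
      reflTransGen_map_of_isVal hval (.proj b) (fun _ _ hx hy => hcomp.proj b hx hy) c hv⟩
  case tapp =>
    rintro Δ Γ v v' A B hv hv' ⟨ht, c⟩ hw
    exact ⟨.tapp hv ht hw, reflTransGen_map_of_isVal hval (.tapp · B)
      (fun _ _ hx hy h => hcomp.tapp hx hy h hw) c hv⟩
  case app =>
    rintro Δ Γ v v' e e' A₁ A₂ hv hv' ⟨htv, cv⟩ ⟨hte, ce⟩
    have htv' := hasTy_of_reflTransGen hwt cv htv
    refine ⟨.app hv htv hte, .trans (b := .app v' e) ?_ ?_⟩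
    · exact reflTransGen_map_of_isVal hval (.app · e)
        (fun _ _ hx hy hxy => hcomp.app hx hy hxy (hrefl _ _ _ _ hte)) cv hv
    · exact ce.lift (Tm.app v') fun _ _ => hcomp.app hv' hv' (hrefl _ _ _ _ htv')
  case case =>
    rintro Δ Γ v v' A m ts es es' hv hv' ⟨htv, cv⟩ hbr
    have htv' := hasTy_of_reflTransGen hwt cv htv
    refine ⟨.case hv htv fun j => (hbr j).1, .trans (b := .case v' m es) ?_ ?_⟩
    · exact reflTransGen_map_of_isVal hval (.case · m es)
        (fun _ _ hx hy hxy => hcomp.case hx hy hxy fun j => hrefl _ _ _ _ (hbr j).1) cv hv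
    · exact reflTransGen_case_of_branches hwt hrefl hcomp hv' htv' hbr

end TIRel

theorem CtxMay.of_compatible {R : TIRel} (hwt : WellTypedRel R) (hrefl : ReflRel R)
    (hcomp : Compatible R) (hval : R.ValPreserving) (hadeq : MayAdequate R) {Δ : ℕ}
    {Γ : List Ty} {a b : Tm} {A : Ty} (h : R Δ Γ a b A) :
    CtxMay Δ Γ a b A :=
  ⟨R.reflTransClosure, TIRel.wellTypedRel_reflTransClosure hwt,
    TIRel.reflRel_reflTransClosure, TIRel.transRel_reflTransClosure,
    TIRel.compatible_reflTransClosure hwt hrefl hcomp hval,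
    TIRel.mayAdequate_reflTransClosure hadeq, (hwt _ _ _ _ _ h).1, .single h⟩

inductive CompatClosure (f g : Tm) (φ : Ty) : ℕ → List Ty → Tm → Tm → Ty → Prop where
  | base : ∀ {Δ Γ}, CtxWf Δ Γ → CompatClosure f g φ Δ Γ f g φ
  | var : ∀ {Δ Γ x A}, CtxWf Δ Γ → Γ[x]? = some A → CompatClosure f g φ Δ Γ (.var x) (.var x) A
  | unit : ∀ {Δ Γ}, CtxWf Δ Γ → CompatClosure f g φ Δ Γ .unit .unit .unit
  | pair : ∀ {Δ Γ v₁ v₂ v₁' v₂' A₁ A₂}, IsVal v₁ → IsVal v₂ → IsVal v₁' → IsVal v₂' →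
      CompatClosure f g φ Δ Γ v₁ v₁' A₁ → CompatClosure f g φ Δ Γ v₂ v₂' A₂ →
      CompatClosure f g φ Δ Γ (.pair v₁ v₂) (.pair v₁' v₂') (.prod A₁ A₂)
  | lam : ∀ {Δ Γ e e' A₁ A₂}, A₁.Wf Δ → CompatClosure f g φ Δ (A₁ :: Γ) e e' A₂ →
      CompatClosure f g φ Δ Γ (.lam e) (.lam e') (.arrow A₁ A₂)
  | inj : ∀ {Δ Γ v v'} {m : ℕ} {ts : Fin m → Ty} {j : ℕ} (hj : j < m),
      IsVal v → IsVal v' → Ty.Wf Δ (.mu m ts) →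
      CompatClosure f g φ Δ Γ v v' (Ty.subst1 (.mu m ts) (ts ⟨j, hj⟩)) →
      CompatClosure f g φ Δ Γ (.inj j v) (.inj j v') (.mu m ts)
  | tlam : ∀ {Δ Γ e e' A},
      CompatClosure f g φ (Δ + 1) (Γ.map (Ty.rename Nat.succ)) e e' A →
      CompatClosure f g φ Δ Γ (.tlam e) (.tlam e') (.all A)
  | proj : ∀ {Δ Γ v v' A₁ A₂} (b : Bool), IsVal v → IsVal v' →
      CompatClosure f g φ Δ Γ v v' (.prod A₁ A₂) →
      CompatClosure f g φ Δ Γ (.proj b v) (.proj b v') (bif b then A₂ else A₁)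
  | app : ∀ {Δ Γ v v' e e' A₁ A₂}, IsVal v → IsVal v' →
      CompatClosure f g φ Δ Γ v v' (.arrow A₁ A₂) → CompatClosure f g φ Δ Γ e e' A₁ →
      CompatClosure f g φ Δ Γ (.app v e) (.app v' e') A₂
  | case : ∀ {Δ Γ v v' A} {m : ℕ} {ts : Fin m → Ty} {es es' : Fin m → Tm},
      IsVal v → IsVal v' → CompatClosure f g φ Δ Γ v v' (.mu m ts) →
      (∀ j, CompatClosure f g φ Δ (Ty.subst1 (.mu m ts) (ts j) :: Γ) (es j) (es' j) A) →
      CompatClosure f g φ Δ Γ (.case v m es) (.case v' m es') A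
  | tapp : ∀ {Δ Γ v v' A B}, IsVal v → IsVal v' → CompatClosure f g φ Δ Γ v v' (.all A) →
      B.Wf Δ → CompatClosure f g φ Δ Γ (.tapp v B) (.tapp v' B) (Ty.subst1 B A)
  | choice : ∀ {Δ Γ}, CtxWf Δ Γ → CompatClosure f g φ Δ Γ .choice .choice natTy

namespace CompatClosure

variable {f g : Tm} {φ : Ty}

theorem wellTyped (hf : HasTy 0 [] f φ) (hg : HasTy 0 [] g φ) {Δ : ℕ} {Γ : List Ty}
    {a b : Tm} {A : Ty} (h : CompatClosure f g φ Δ Γ a b A) : HasTy Δ Γ a A ∧ HasTy Δ Γ b A := by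
  induction h with
  | base hΓ => exact ⟨hf.weaken hΓ, hg.weaken hΓ⟩
  | var hΓ hx => exact ⟨.var hΓ hx, .var hΓ hx⟩
  | unit hΓ => exact ⟨.unit hΓ, .unit hΓ⟩
  | pair h₁ h₂ h₁' h₂' _ _ ih₁ ih₂ => exact ⟨.pair h₁ h₂ ih₁.1 ih₂.1, .pair h₁' h₂' ih₁.2 ih₂.2⟩
  | lam hw _ ih => exact ⟨.lam hw ih.1, .lam hw ih.2⟩
  | inj hj hv hv' hw _ ih => exact ⟨.inj hj hv hw ih.1, .inj hj hv' hw ih.2⟩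
  | tlam _ ih => exact ⟨.tlam ih.1, .tlam ih.2⟩
  | proj b hv hv' _ ih => exact ⟨.proj b hv ih.1, .proj b hv' ih.2⟩
  | app hv hv' _ _ ih₁ ih₂ => exact ⟨.app hv ih₁.1 ih₂.1, .app hv' ih₁.2 ih₂.2⟩
  | case hv hv' _ _ ihv ihs =>
      exact ⟨.case hv ihv.1 fun j => (ihs j).1, .case hv' ihv.2 fun j => (ihs j).2⟩
  | tapp hv hv' _ hw ih => exact ⟨.tapp hv ih.1 hw, .tapp hv' ih.2 hw⟩
  | choice hΓ => exact ⟨.choice hΓ, .choice hΓ⟩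

theorem of_hasTy {Δ : ℕ} {Γ : List Ty} {a : Tm} {A : Ty} (h : HasTy Δ Γ a A) :
    CompatClosure f g φ Δ Γ a a A := by
  induction h with
  | var hΓ hx => exact .var hΓ hx
  | unit hΓ => exact .unit hΓ
  | pair h₁ h₂ _ _ ih₁ ih₂ => exact .pair h₁ h₂ h₁ h₂ ih₁ ih₂
  | lam hw _ ih => exact .lam hw ih
  | inj hj hv hw _ ih => exact .inj hj hv hv hw ih
  | tlam _ ih => exact .tlam ih
  | proj b hv _ ih => exact .proj b hv hv ih
  | app hv _ _ ih₁ ih₂ => exact .app hv hv ih₁ ih₂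
  | case hv _ _ ihv ihs => exact .case hv hv ihv ihs
  | tapp hv _ hw ih => exact .tapp hv hv ih hw
  | choice hΓ => exact .choice hΓ

theorem isVal (hg : IsVal g) {Δ : ℕ} {Γ : List Ty} {a b : Tm} {A : Ty}
    (h : CompatClosure f g φ Δ Γ a b A) (ha : IsVal a) : IsVal b := by
  cases h with
  | base => exact hg
  | var | unit | lam | tlam => constructor
  | pair _ _ h₁' h₂' => exact .pair h₁' h₂'
  | inj _ _ hv' => exact .inj hv'
  | proj | app | case | tapp | choice => cases ha

theorem rename (hf : HasTy 0 [] f φ) (hg : HasTy 0 [] g φ) {Δ : ℕ} {Γ : List Ty}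
    {a b : Tm} {A : Ty} (h : CompatClosure f g φ Δ Γ a b A) {Γ' : List Ty} {ρ : ℕ → ℕ}
    (hΓ' : CtxWf Δ Γ') (hρ : ∀ i B, Γ[i]? = some B → Γ'[ρ i]? = some B) :
    CompatClosure f g φ Δ Γ' (a.rename ρ) (b.rename ρ) A := by
  induction h generalizing Γ' ρ with
  | base =>
      rw [hf.rename_eq_self_of_nil, hg.rename_eq_self_of_nil]; exact .base hΓ'
  | var _ hx => exact .var hΓ' (hρ _ _ hx)
  | unit => exact .unit hΓ'
  | choice => exact .choice hΓ'
  | pair h₁ h₂ h₁' h₂' _ _ ih₁ ih₂ =>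
      exact .pair (h₁.rename ρ) (h₂.rename ρ) (h₁'.rename ρ) (h₂'.rename ρ)
        (ih₁ hΓ' hρ) (ih₂ hΓ' hρ)
  | lam hw _ ih => exact .lam hw (ih (hΓ'.cons hw) (getElem?_cons_liftR hρ _))
  | inj hj hv hv' hw _ ih => exact .inj hj (hv.rename ρ) (hv'.rename ρ) hw (ih hΓ' hρ)
  | tlam _ ih =>
      refine .tlam (ih hΓ'.map_rename_succ fun i B hB => ?_)
      rw [List.getElem?_map] at hB ⊢
      obtain ⟨B', hB', rfl⟩ := Option.map_eq_some_iff.1 hB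
      rw [hρ _ _ hB']; rfl
  | proj b hv hv' _ ih => exact .proj b (hv.rename ρ) (hv'.rename ρ) (ih hΓ' hρ)
  | app hv hv' _ _ ih₁ ih₂ =>
      exact .app (hv.rename ρ) (hv'.rename ρ) (ih₁ hΓ' hρ) (ih₂ hΓ' hρ)
  | case hv hv' _ hbr ihv ihs =>
      refine .case (hv.rename ρ) (hv'.rename ρ) (ihv hΓ' hρ) fun j => ?_
      have hwf := ((hbr j).wellTyped hf hg).1.ctxWf _ List.mem_cons_self
      exact ihs j (hΓ'.cons hwf) (getElem?_cons_liftR hρ _)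
  | tapp hv hv' _ hw ih => exact .tapp (hv.rename ρ) (hv'.rename ρ) (ih hΓ' hρ) hw

theorem tySubst (hφ : φ.Wf 0) (hf : HasTy 0 [] f φ) (hg : HasTy 0 [] g φ) {Δ : ℕ}
    {Γ : List Ty} {a b : Tm} {A : Ty} (h : CompatClosure f g φ Δ Γ a b A) {Δ' : ℕ}
    {δ : ℕ → Ty} (hδ : ∀ i < Δ, (δ i).Wf Δ') :
    CompatClosure f g φ Δ' (Γ.map (Ty.subst δ)) (a.tySubst δ) (b.tySubst δ) (A.subst δ) := by
  induction h generalizing Δ' δ with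
  | base hΓ =>
      rw [hf.tySubst_eq_self_of_nil, hg.tySubst_eq_self_of_nil, Ty.subst_eq_of_wf_zero hφ]
      exact .base (hΓ.map_subst hδ)
  | var hΓ hx => exact .var (hΓ.map_subst hδ) (by rw [List.getElem?_map, hx]; rfl)
  | unit hΓ => exact .unit (hΓ.map_subst hδ)
  | choice hΓ =>
      rw [Ty.subst_eq_of_wf_zero (natTy_wf 0)]; exact .choice (hΓ.map_subst hδ)
  | pair h₁ h₂ h₁' h₂' _ _ ih₁ ih₂ =>
      exact .pair (h₁.tySubst δ) (h₂.tySubst δ) (h₁'.tySubst δ) (h₂'.tySubst δ)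
        (ih₁ hδ) (ih₂ hδ)
  | lam hw _ ih => exact .lam (hw.subst hδ) (ih hδ)
  | inj hj hv hv' hw _ ih =>
      refine .inj hj (hv.tySubst δ) (hv'.tySubst δ) (hw.subst hδ) ?_
      have := ih hδ
      rwa [Ty.subst1_subst] at this
  | tlam _ ih =>
      have := ih (liftS_wf hδ)
      rw [map_rename_succ_subst_liftS] at this
      exact .tlam this
  | proj b hv hv' _ ih =>
      cases b
      · exact .proj false (hv.tySubst δ) (hv'.tySubst δ) (ih hδ)
      · exact .proj true (hv.tySubst δ) (hv'.tySubst δ) (ih hδ)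
  | app hv hv' _ _ ih₁ ih₂ => exact .app (hv.tySubst δ) (hv'.tySubst δ) (ih₁ hδ) (ih₂ hδ)
  | case hv hv' _ _ ihv ihs =>
      refine .case (hv.tySubst δ) (hv'.tySubst δ) (ihv hδ) fun j => ?_
      have := ihs j hδ
      rwa [List.map_cons, Ty.subst1_subst] at this
  | tapp hv hv' _ hw ih =>
      rw [Ty.subst1_subst]
      exact .tapp (hv.tySubst δ) (hv'.tySubst δ) (ih hδ) (hw.subst hδ)

theorem tyRename (hφ : φ.Wf 0) (hf : HasTy 0 [] f φ) (hg : HasTy 0 [] g φ) {Δ : ℕ}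
    {Γ : List Ty} {a b : Tm} {A : Ty} (h : CompatClosure f g φ Δ Γ a b A) {Δ' : ℕ}
    {ρ : ℕ → ℕ} (hρ : ∀ i < Δ, ρ i < Δ') :
    CompatClosure f g φ Δ' (Γ.map (Ty.rename ρ)) (a.tyRename ρ) (b.tyRename ρ) (A.rename ρ) := by
  rw [Ty.rename_eq_subst, Tm.tyRename_eq_tySubst]
  exact h.tySubst hφ hf hg hρ

theorem liftT_cons (hf : HasTy 0 [] f φ) (hg : HasTy 0 [] g φ) {Δ : ℕ} {Γ Γ' : List Ty} {A : Ty}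
    {γ γ' : ℕ → Tm} (hΓ' : CtxWf Δ (A :: Γ'))
    (hγ : ∀ i B, Γ[i]? = some B → CompatClosure f g φ Δ Γ' (γ i) (γ' i) B) :
    ∀ i B, (A :: Γ)[i]? = some B →
      CompatClosure f g φ Δ (A :: Γ') (liftT γ i) (liftT γ' i) B
  | 0, _, hB => .var hΓ' hB
  | i + 1, B, hB => (hγ i B hB).rename hf hg hΓ' fun _ _ hk => hk

theorem subst (hφ : φ.Wf 0) (hf : HasTy 0 [] f φ) (hg : HasTy 0 [] g φ) {Δ : ℕ}
    {Γ : List Ty} {a b : Tm} {A : Ty} (h : CompatClosure f g φ Δ Γ a b A) {Γ' : List Ty}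
    {γ γ' : ℕ → Tm} (hΓ' : CtxWf Δ Γ') (hγv : ∀ i, IsVal (γ i)) (hγv' : ∀ i, IsVal (γ' i))
    (hγ : ∀ i B, Γ[i]? = some B → CompatClosure f g φ Δ Γ' (γ i) (γ' i) B) :
    CompatClosure f g φ Δ Γ' (a.subst γ) (b.subst γ') A := by
  induction h generalizing Γ' γ γ' with
  | base => rw [hf.subst_eq_self_of_nil, hg.subst_eq_self_of_nil]; exact .base hΓ'
  | var _ hx => exact hγ _ _ hx
  | unit => exact .unit hΓ'
  | choice => exact .choice hΓ'
  | pair h₁ h₂ h₁' h₂' _ _ ih₁ ih₂ =>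
      exact .pair (h₁.subst hγv) (h₂.subst hγv) (h₁'.subst hγv') (h₂'.subst hγv')
        (ih₁ hΓ' hγv hγv' hγ) (ih₂ hΓ' hγv hγv' hγ)
  | lam hw _ ih =>
      exact .lam hw (ih (hΓ'.cons hw) (IsVal.liftT hγv) (IsVal.liftT hγv')
        (liftT_cons hf hg (hΓ'.cons hw) hγ))
  | inj hj hv hv' hw _ ih =>
      exact .inj hj (hv.subst hγv) (hv'.subst hγv') hw (ih hΓ' hγv hγv' hγ)
  | tlam _ ih =>
      refine .tlam (ih hΓ'.map_rename_succ (fun i => (hγv i).tyRename _)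
        (fun i => (hγv' i).tyRename _) fun i B hB => ?_)
      rw [List.getElem?_map] at hB
      obtain ⟨B', hB', rfl⟩ := Option.map_eq_some_iff.1 hB
      exact (hγ i B' hB').tyRename hφ hf hg fun _ => Nat.succ_lt_succ
  | proj b hv hv' _ ih => exact .proj b (hv.subst hγv) (hv'.subst hγv') (ih hΓ' hγv hγv' hγ)
  | app hv hv' _ _ ih₁ ih₂ =>
      exact .app (hv.subst hγv) (hv'.subst hγv') (ih₁ hΓ' hγv hγv' hγ) (ih₂ hΓ' hγv hγv' hγ)
  | case hv hv' _ hbr ihv ihs =>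
      refine .case (hv.subst hγv) (hv'.subst hγv') (ihv hΓ' hγv hγv' hγ) fun j => ?_
      have hwf := ((hbr j).wellTyped hf hg).1.ctxWf _ List.mem_cons_self
      exact ihs j (hΓ'.cons hwf) (IsVal.liftT hγv) (IsVal.liftT hγv')
        (liftT_cons hf hg (hΓ'.cons hwf) hγ)
  | tapp hv hv' _ hw ih => exact .tapp (hv.subst hγv) (hv'.subst hγv') (ih hΓ' hγv hγv' hγ) hw

theorem subst1 (hφ : φ.Wf 0) (hf : HasTy 0 [] f φ) (hg : HasTy 0 [] g φ) {A B : Ty}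
    {e e' u u' : Tm} (h : CompatClosure f g φ 0 [A] e e' B) (hu : IsVal u) (hu' : IsVal u')
    (huu' : CompatClosure f g φ 0 [] u u' A) :
    CompatClosure f g φ 0 [] (CountChoice.subst1 u e) (CountChoice.subst1 u' e') B := by
  refine h.subst hφ hf hg CtxWf.nil ?_ ?_ ?_
  · rintro (_ | i) <;> [exact hu; exact .var]
  · rintro (_ | i) <;> [exact hu'; exact .var]
  · rintro (_ | i) B hB
    · cases hB; exact huu'
    · cases hB

theorem tySubst1 (hφ : φ.Wf 0) (hf : HasTy 0 [] f φ) (hg : HasTy 0 [] g φ) {e e' : Tm}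
    {A B : Ty} (h : CompatClosure f g φ 1 [] e e' A) (hB : B.Wf 0) :
    CompatClosure f g φ 0 [] (CountChoice.tySubst1 B e) (CountChoice.tySubst1 B e')
      (Ty.subst1 B A) :=
  h.tySubst hφ hf hg fun
    | 0, _ => hB
    | _ + 1, hi => absurd hi (by omega)

/-- Related evaluation contexts; `C` is the type of the hole and `A` that of the filled
context. -/
inductive Stack (f g : Tm) (φ : Ty) : List Tm → List Tm → Ty → Ty → Prop where
  | nil : ∀ {A}, Stack f g φ [] [] A A
  | cons : ∀ {v w E E' C A B}, IsVal v → IsVal w →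
      CompatClosure f g φ 0 [] v w (.arrow A B) → Stack f g φ E E' C A →
      Stack f g φ (v :: E) (w :: E') C B

theorem exists_stack_of_plug (hfv : IsVal f) :
    ∀ {E : List Tm} {a T' : Tm} {A : Ty}, CompatClosure f g φ 0 [] (plug E a) T' A →
      (∀ v ∈ E, IsVal v) →
      ∃ E' a' C, T' = plug E' a' ∧ Stack f g φ E E' C A ∧ CompatClosure f g φ 0 [] a a' C
  | [], _, T', A, h, _ => ⟨[], T', A, rfl, .nil, h⟩
  | v :: E, a, T', A, h, hE => by
      rw [plug_cons] at h
      cases h with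
      | base => cases hfv
      | app hv hv' hvw hrest =>
          obtain ⟨E', a', C, rfl, st, ha⟩ :=
            exists_stack_of_plug hfv hrest fun w hw => hE w (List.mem_cons_of_mem _ hw)
          exact ⟨_ :: E', a', C, rfl, .cons hv hv' hvw st, ha⟩

namespace Stack

theorem plug {E E' : List Tm} {C A : Ty} (st : Stack f g φ E E' C A) {a a' : Tm}
    (h : CompatClosure f g φ 0 [] a a' C) : CompatClosure f g φ 0 [] (plug E a) (plug E' a') A := by
  induction st with
  | nil => exact h
  | cons hv hw hvw _ ih => exact .app hv hw hvw (ih h)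

theorem isVal_right {E E' : List Tm} {C A : Ty} (st : Stack f g φ E E' C A) :
    ∀ w ∈ E', IsVal w := by
  induction st with
  | nil => nofun
  | cons _ hw _ _ ih =>
      intro u hu
      rcases List.mem_cons.1 hu with rfl | hu
      exacts [hw, ih u hu]

theorem mayConv_of_ctxMay (hf : HasTy 0 [] f φ) (hg : HasTy 0 [] g φ) {E E' : List Tm}
    {C A : Ty} (st : Stack f g φ E E' C A) {x y : Tm} (hxy : CtxMay 0 [] x y C)
    (hx : MayConv (CountChoice.plug E' x)) : MayConv (CountChoice.plug E' y) := by
  obtain ⟨R, -, hrefl, -, hcomp, hadeq, hR⟩ := hxy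
  refine hadeq _ _ A ?_ hx
  clear hx
  induction st with
  | nil => exact hR
  | cons _ hw hvw _ ih => exact hcomp.app hw hw (hrefl _ _ _ _ (hvw.wellTyped hf hg).2) (ih hR)

end Stack

section Adequacy

variable {τ σ : Ty} (hτσ : (Ty.arrow τ σ).Wf 0) (hfv : IsVal f) (hgv : IsVal g)
  (hfT : HasTy 0 [] f (.arrow τ σ)) (hgT : HasTy 0 [] g (.arrow τ σ))
  (happ : ∀ u, IsVal u → HasTy 0 [] u τ → CtxMay 0 [] (.app f u) (.app g u) σ)
include hτσ hfv hgv hfT hgT happ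

theorem headStep_sim {r s r' : Tm} {l : Lbl} {C : Ty} (hr : HeadStep r l s)
    (h : CompatClosure f g (.arrow τ σ) 0 [] r r' C) :
    ∃ r₁ l₁ s₁, Step r₁ l₁ s₁ ∧ CompatClosure f g (.arrow τ σ) 0 [] s s₁ C ∧
      (r₁ = r' ∨ CtxMay 0 [] r₁ r' C) := by
  cases hr with
  | projFst =>
      cases h with
      | base => cases hfv
      | proj _ _ _ hp =>
          cases hp with
          | pair _ _ h₁' h₂' h₁ _ => exact ⟨_, _, _, .projFst h₁' h₂', h₁, .inl rfl⟩
  | projSnd =>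
      cases h with
      | base => cases hfv
      | proj _ _ _ hp =>
          cases hp with
          | pair _ _ h₁' h₂' _ h₂ => exact ⟨_, _, _, .projSnd h₁' h₂', h₂, .inl rfl⟩
  | beta hu =>
      cases h with
      | base => cases hfv
      | app _ _ hfun harg =>
          have hu' := harg.isVal hgv hu
          cases hfun with
          | lam _ hbody =>
              exact ⟨_, _, _, .beta hu', hbody.subst1 hτσ hfT hgT hu hu' harg, .inl rfl⟩
          | base =>
              refine ⟨_, _, _, .beta hu', ?_, .inr (happ _ hu' (harg.wellTyped hfT hgT).2)⟩
              exact (of_hasTy hfT.lam_inv).subst1 hτσ hfT hgT hu hu' harg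
  | tbeta =>
      cases h with
      | base => cases hfv
      | tapp _ _ hfun hB =>
          cases hfun with
          | tlam hbody => exact ⟨_, _, _, .tbeta, hbody.tySubst1 hτσ hfT hgT hB, .inl rfl⟩
  | caseInj hj hu =>
      cases h with
      | base => cases hfv
      | case _ _ hscr hbr =>
          cases hscr with
          | inj _ _ hu' _ huu' =>
              exact ⟨_, _, _, .caseInj hj hu', (hbr _).subst1 hτσ hfT hgT hu hu' huu', .inl rfl⟩
  | choice n =>
      cases h with
      | base => cases hfv
      | choice => exact ⟨_, _, _, .choice n, of_hasTy (numeral_hasTy n), .inl rfl⟩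

theorem mayConv_of_step {T S T' : Tm} {l : Lbl} {A : Ty} (hstep : Step T l S)
    (ih : ∀ S' B, CompatClosure f g (.arrow τ σ) 0 [] S S' B → MayConv S')
    (h : CompatClosure f g (.arrow τ σ) 0 [] T T' A) : MayConv T' := by
  obtain ⟨E, r, s, hE, rfl, rfl, hr⟩ := hstep.exists_plug_headStep
  obtain ⟨E', r', C, rfl, st, hrr'⟩ := exists_stack_of_plug hfv h hE
  obtain ⟨r₁, l₁, s₁, hstep₁, hss₁, hr₁⟩ := headStep_sim hτσ hfv hgv hfT hgT happ hr hrr'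
  have hconv : MayConv (plug E' r₁) := .of_step (hstep₁.plug st.isVal_right) (ih _ _ (st.plug hss₁))
  rcases hr₁ with rfl | hctx
  exacts [hconv, st.mayConv_of_ctxMay hfT hgT hctx hconv]

theorem mayConv_of_stepsU {T v : Tm} {n : ℕ} (hsteps : StepsU T n v) (hv : IsVal v) {T' : Tm}
    {A : Ty} (h : CompatClosure f g (.arrow τ σ) 0 [] T T' A) : MayConv T' := by
  induction hsteps generalizing T' A with
  | refl => exact .of_isVal (h.isVal hgv hv)
  | unfold hs _ ih | other _ hs _ ih =>
      exact mayConv_of_step hτσ hfv hgv hfT hgT happ hs (fun _ _ hS => ih hv hS) h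

theorem mayAdequate : MayAdequate (CompatClosure f g (.arrow τ σ)) :=
  fun _ _ _ h ⟨_, _, hsteps, hv⟩ => mayConv_of_stepsU hτσ hfv hgv hfT hgT happ hsteps hv h

end Adequacy

end CompatClosure

theorem CtxMay.of_forall_app {τ σ : Ty} {f g : Tm} (hτσ : (Ty.arrow τ σ).Wf 0) (hfv : IsVal f)
    (hgv : IsVal g) (hfT : HasTy 0 [] f (.arrow τ σ)) (hgT : HasTy 0 [] g (.arrow τ σ))
    (happ : ∀ u, IsVal u → HasTy 0 [] u τ → CtxMay 0 [] (.app f u) (.app g u) σ) :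
    CtxMay 0 [] f g (.arrow τ σ) :=
  CtxMay.of_compatible (R := CompatClosure f g (.arrow τ σ))
    (fun _ _ _ _ _ h => h.wellTyped hfT hgT) (fun _ _ _ _ h => .of_hasTy h)
    ⟨.var, .unit, .pair, .lam, .inj, .tlam, .proj, .app, .case, .tapp, .choice⟩
    (fun _ _ _ _ _ h => h.isVal hgv) (CompatClosure.mayAdequate hτσ hfv hgv hfT hgT happ)
    (.base CtxWf.nil)

/-- **Functional extensionality for values (may)** (Lemma 4.13): if `f` and
`g` are closed values of type `τ→σ` such that `f u ≅↓ctx g u : σ` for every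
closed value `u` of type `τ`, then `f ≅↓ctx g : τ→σ`. -/
theorem fun_extensionality_may (τ σ : Ty) (hτ : Ty.Wf 0 τ) (hσ : Ty.Wf 0 σ)
    (f g : Tm) (hf : IsVal f) (hg : IsVal g)
    (hfT : HasTy 0 [] f (.arrow τ σ)) (hgT : HasTy 0 [] g (.arrow τ σ))
    (h : ∀ u, IsVal u → HasTy 0 [] u τ → CtxMayEq 0 [] (.app f u) (.app g u) σ) :
    CtxMayEq 0 [] f g (.arrow τ σ) :=
  ⟨.of_forall_app ⟨hτ, hσ⟩ hf hg hfT hgT fun u hu huT => (h u hu huT).1,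
    .of_forall_app ⟨hτ, hσ⟩ hg hf hgT hfT fun u hu huT => (h u hu huT).2⟩

end CountChoice
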